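/- arXiv:1409.6176 — 5 statements merged into one kernel-verified Lean document; each statement's English description precedes it below -/
import Mathlib

section
/- Let p_1, ..., p_n ∈ R^d affinely span R^d and suppose 0 lies in the interior of P = conv{p_1,...,p_n}. Then there exists a unique y in the interior of the polar body P° such that Σ_{i=1}^n p_i/(1 + ⟨p_i, y⟩) = 0. -/
/-!
The maximum of `∏ i, (1 + ⟪p i, y⟫)` over the polar body `P°`, which is compact because `0` is
interior to `P`, is at least its value `1` at the origin; hence every factor is positive there, the
maximizer is interior, and it is a critical point of the concave function
`F y = ∑ i, log (1 + ⟪p i, y⟫)`, whose gradient is `∑ i, (1 + ⟪p i, y⟫)⁻¹ • p i`.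
For uniqueness, with `a i`, `b i` the factors at two critical points `y`, `z`,
`⟪∇F y - ∇F z, z - y⟫ = ∑ i, (b i - a i) ^ 2 / (a i * b i)`, so `z - y` is orthogonal to every `p i`;
then the whole line through `z - y` lies in `P°`, which is bounded, so `z = y`.
-/

open scoped RealInnerProductSpace

open Set Finset Filter Topology Bornology

section PolarDual

variable {E : Type*} [NormedAddCommGroup E] [InnerProductSpace ℝ E]

-- The one-sided polar, unlike Mathlib's absolute `LinearMap.polar`.
def polarDual (s : Set E) : Set E := {z | ∀ x ∈ s, -1 ≤ ⟪x, z⟫}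

theorem zero_mem_polarDual (s : Set E) : (0 : E) ∈ polarDual s := fun x _ => by
  simp

theorem mem_polarDual_range {ι : Type*} {p : ι → E} {z : E} :
    z ∈ polarDual (range p) ↔ ∀ i, -1 ≤ ⟪p i, z⟫ :=
  Set.forall_mem_range

theorem isClosed_polarDual (s : Set E) : IsClosed (polarDual s) := by
  simp only [polarDual, ofPred_forall]
  exact isClosed_biInter fun x _ => isClosed_le continuous_const (by fun_prop)

theorem polarDual_convexHull (s : Set E) : polarDual (convexHull ℝ s) = polarDual s := by
  refine Subset.antisymm (fun z hz x hx => hz x (subset_convexHull ℝ s hx)) fun z hz => ?_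
  exact convexHull_min hz (convex_halfSpace_ge (innerₗ E |>.flip z).isLinear (-1))

theorem neg_one_lt_inner_of_mem_interior_polarDual {s : Set E} {x z : E}
    (hz : z ∈ interior (polarDual s)) (hx : x ∈ s) : -1 < ⟪x, z⟫ := by
  have hscale : Tendsto (fun t : ℝ => t • z) (𝓝[>] 1) (𝓝 z) :=
    ((continuous_id.smul continuous_const).tendsto' 1 z (one_smul ℝ z)).mono_left
      nhdsWithin_le_nhds
  obtain ⟨t, ht, hts⟩ :=
    ((eventually_mem_nhdsWithin).and (hscale.eventually (mem_interior_iff_mem_nhds.1 hz))).exists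
  have := hts x hx
  rw [real_inner_smul_right] at this
  have ht : (1 : ℝ) < t := ht
  nlinarith

theorem interior_polarDual_range {ι : Type*} [Finite ι] (p : ι → E) :
    interior (polarDual (range p)) = {z | ∀ i, -1 < ⟪p i, z⟫} := by
  refine Subset.antisymm
    (fun z hz i => neg_one_lt_inner_of_mem_interior_polarDual hz (mem_range_self i)) ?_
  refine interior_maximal (fun z hz => mem_polarDual_range.2 fun i => (hz i).le) ?_
  simp only [ofPred_forall]
  exact isOpen_iInter_of_finite fun i => isOpen_lt continuous_const (by fun_prop)

theorem isBounded_polarDual_of_zero_mem_interior {s : Set E} (h : (0 : E) ∈ interior s) :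
    IsBounded (polarDual s) := by
  obtain ⟨ε, hε, hball⟩ := Metric.nhds_basis_closedBall.mem_iff.1 (mem_interior_iff_mem_nhds.1 h)
  refine isBounded_iff_forall_norm_le.2 ⟨ε⁻¹, fun z hz => ?_⟩
  rcases eq_or_ne z 0 with rfl | hz0
  · simpa using hε.le
  have hnz : 0 < ‖z‖ := norm_pos_iff.2 hz0
  -- test the polar condition against the point of the sphere of radius `ε` opposite to `z`
  have hx : -(ε / ‖z‖) • z ∈ s := hball <| by
    rw [Metric.mem_closedBall, dist_zero_right, norm_smul, norm_neg,
      Real.norm_of_nonneg (by positivity), div_mul_cancel₀ _ hnz.ne']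
  have := hz _ hx
  rw [real_inner_smul_left, real_inner_self_eq_norm_sq] at this
  have hεz : ε / ‖z‖ * ‖z‖ ^ 2 = ε * ‖z‖ := by field_simp
  rw [← one_div, le_div_iff₀ hε]
  linarith

theorem eq_zero_of_forall_inner_eq_zero {ι : Type*} {p : ι → E}
    (hb : IsBounded (polarDual (range p))) {v : E} (hv : ∀ i, ⟪p i, v⟫ = 0) : v = 0 := by
  obtain ⟨C, hC⟩ := isBounded_iff_forall_norm_le.1 hb
  by_contra hv0
  have hline : ((|C| + 1) / ‖v‖) • v ∈ polarDual (range p) :=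
    mem_polarDual_range.2 fun i => by simp [real_inner_smul_right, hv i]
  have := hC _ hline
  rw [norm_smul, Real.norm_of_nonneg (by positivity),
    div_mul_cancel₀ _ (norm_ne_zero_iff.2 hv0)] at this
  linarith [le_abs_self C]

end PolarDual

section CenteringPoint

variable {E : Type*} [NormedAddCommGroup E] [InnerProductSpace ℝ E] {ι : Type*} [Fintype ι]
  (p : ι → E)

theorem hasFDerivAt_sum_log_one_add_inner {y : E} (hy : ∀ i, 1 + ⟪p i, y⟫ ≠ 0) :
    HasFDerivAt (fun z => ∑ i, Real.log (1 + ⟪p i, z⟫))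
      (innerSL ℝ (∑ i, (1 + ⟪p i, y⟫)⁻¹ • p i)) y := by
  simp only [map_sum, map_smul]
  exact HasFDerivAt.fun_sum fun i _ => (((innerSL ℝ (p i)).hasFDerivAt).const_add 1).log (hy i)

theorem isLocalMax_sum_log_of_isMaxOn_prod {y : E}
    (hmax : IsMaxOn (fun z => ∏ i, (1 + ⟪p i, z⟫)) (polarDual (range p)) y)
    (hy : ∀ i, -1 < ⟪p i, y⟫) :
    IsLocalMax (fun z => ∑ i, Real.log (1 + ⟪p i, z⟫)) y := by
  have hU : interior (polarDual (range p)) ∈ 𝓝 y :=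
    isOpen_interior.mem_nhds (by rwa [interior_polarDual_range])
  filter_upwards [hU] with z hz
  have hzK := interior_subset hz
  rw [interior_polarDual_range] at hz
  have hne : ∀ w : E, (∀ i, -1 < ⟪p i, w⟫) → ∀ i ∈ Finset.univ, 1 + ⟪p i, w⟫ ≠ 0 :=
    fun w hw i _ => by linarith [hw i]
  simp only [← Real.log_prod (hne z hz), ← Real.log_prod (hne y hy)]
  exact Real.log_le_log (prod_pos fun i _ => by linarith [hz i]) (hmax hzK)

theorem exists_centering_point_of_isCompact_polarDual (hK : IsCompact (polarDual (range p))) :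
    ∃ y, (∀ i, -1 < ⟪p i, y⟫) ∧ ∑ i, (1 + ⟪p i, y⟫)⁻¹ • p i = 0 := by
  obtain ⟨y, hyK, hmax⟩ := hK.exists_isMaxOn ⟨0, zero_mem_polarDual _⟩
    (by fun_prop : Continuous fun z => ∏ i, (1 + ⟪p i, z⟫)).continuousOn
  have hprod : 0 < ∏ i, (1 + ⟪p i, y⟫) := by
    have h1 : (1 : ℝ) ≤ ∏ i, (1 + ⟪p i, y⟫) := by simpa using hmax (zero_mem_polarDual _)
    linarith
  have hy : ∀ i, -1 < ⟪p i, y⟫ := fun i =>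
    (mem_polarDual_range.1 hyK i).lt_of_ne fun h =>
      hprod.ne' (prod_eq_zero (mem_univ i) (by rw [← h]; ring))
  refine ⟨y, hy, ?_⟩
  have hcrit := (isLocalMax_sum_log_of_isMaxOn_prod p hmax hy).hasFDerivAt_eq_zero
    (hasFDerivAt_sum_log_one_add_inner p fun i => by linarith [hy i])
  rw [← norm_eq_zero, ← innerSL_apply_norm ℝ, hcrit, norm_zero]

theorem centering_point_unique (hp : ∀ v, (∀ i, ⟪p i, v⟫ = 0) → v = 0) {y z : E}
    (hy : ∀ i, -1 < ⟪p i, y⟫) (hz : ∀ i, -1 < ⟪p i, z⟫)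
    (hy0 : ∑ i, (1 + ⟪p i, y⟫)⁻¹ • p i = 0) (hz0 : ∑ i, (1 + ⟪p i, z⟫)⁻¹ • p i = 0) :
    y = z := by
  set a : ι → ℝ := fun i => 1 + ⟪p i, y⟫
  set b : ι → ℝ := fun i => 1 + ⟪p i, z⟫
  have ha0 : ∀ i, 0 < a i := fun i => by linarith [hy i]
  have hb0 : ∀ i, 0 < b i := fun i => by linarith [hz i]
  have hdiff : ∀ i, ⟪p i, z - y⟫ = b i - a i := fun i => by rw [inner_sub_right]; ring
  -- monotonicity of the gradient `y ↦ ∑ i, (1 + ⟪p i, y⟫)⁻¹ • p i` of the concave log-barrier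
  have hmono : ∑ i, (b i - a i) ^ 2 / (a i * b i) = 0 :=
    calc ∑ i, (b i - a i) ^ 2 / (a i * b i)
        = ∑ i, ((a i)⁻¹ - (b i)⁻¹) * ⟪p i, z - y⟫ := sum_congr rfl fun i _ => by
          rw [hdiff]; field_simp [(ha0 i).ne', (hb0 i).ne']
      _ = ⟪∑ i, (a i)⁻¹ • p i - ∑ i, (b i)⁻¹ • p i, z - y⟫ := by
          simp only [inner_sub_left, sum_inner, real_inner_smul_left, sub_mul, sum_sub_distrib]
      _ = 0 := by rw [hy0, hz0, sub_zero, inner_zero_left]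
  have hterms := (sum_eq_zero_iff_of_nonneg fun i _ =>
    div_nonneg (sq_nonneg _) (mul_pos (ha0 i) (hb0 i)).le).1 hmono
  refine (sub_eq_zero.1 (hp (z - y) fun i => ?_)).symm
  have := hterms i (mem_univ i)
  rw [div_eq_zero_iff, or_iff_left (mul_pos (ha0 i) (hb0 i)).ne', sq_eq_zero_iff] at this
  rw [hdiff, this]

end CenteringPoint

theorem existsUnique_centering_point_general
    (d n : ℕ) (p : Fin n → EuclideanSpace ℝ (Fin d))
    (h0 : (0 : EuclideanSpace ℝ (Fin d)) ∈
      interior (convexHull ℝ (Set.range p))) :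
    ∃! y : EuclideanSpace ℝ (Fin d),
      y ∈ interior {z : EuclideanSpace ℝ (Fin d) |
        ∀ x ∈ convexHull ℝ (Set.range p), -1 ≤ ⟪x, z⟫} ∧
      ∑ i, (1 + ⟪p i, y⟫)⁻¹ • p i = 0 := by
  have hbdd := isBounded_polarDual_of_zero_mem_interior h0
  rw [polarDual_convexHull] at hbdd
  change ∃! y, y ∈ interior (polarDual (convexHull ℝ (range p))) ∧ _
  rw [polarDual_convexHull, interior_polarDual_range]
  obtain ⟨y, hy, hy0⟩ := exists_centering_point_of_isCompact_polarDual p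
    (Metric.isCompact_of_isClosed_isBounded (isClosed_polarDual _) hbdd)
  exact ⟨y, ⟨hy, hy0⟩, fun z ⟨hz, hz0⟩ => (centering_point_unique p
    (fun _ => eq_zero_of_forall_inner_eq_zero hbdd) hy hz hy0 hz0).symm⟩

/-- existence and uniqueness of `y` in the interior of the polar body
with `Σ p_i / (1 + ⟨p_i, y⟩) = 0`. -/
theorem existsUnique_centering_point
    (d n : ℕ) (p : Fin n → EuclideanSpace ℝ (Fin d))
    (hspan : affineSpan ℝ (Set.range p) = ⊤)
    (h0 : (0 : EuclideanSpace ℝ (Fin d)) ∈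
      interior (convexHull ℝ (Set.range p))) :
    ∃! y : EuclideanSpace ℝ (Fin d),
      y ∈ interior {z : EuclideanSpace ℝ (Fin d) |
        ∀ x ∈ convexHull ℝ (Set.range p), -1 ≤ ⟪x, z⟫} ∧
      ∑ i, (1 + ⟪p i, y⟫)⁻¹ • p i = 0 :=
  existsUnique_centering_point_general d n p h0
end

section
/- Let C be the light cone {y ∈ R^{d+1} : y_0 ≥ 0, y_0² ≥ y_1² + ... + y_d²} (the cone over the unit ball B^d). Then for every y in the interior of C, vol_{d+1}({x ∈ C : ⟨x,y⟩ ≤ 1}) = β_d / ((d+1) ‖y‖_{1,d}^{d+1}), where β_d is the volume of the d-dimensional unit ball and ‖y‖_{1,d} = √(y_0² - y_1² - ... - y_d²). -/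
/-!
Write `q(x) = x₀² - x₁² - ⋯ - x_d²` and `b` for its Minkowski bilinear form, so that
`C = {x | x₀ ≥ 0, q(x) ≥ 0}` and `⟪x, y⟫ = b(x, ŷ)` with `ŷ = (y₀, -y₁, …, -y_d)`.
For `y` in the interior of `C` put `s = √q(y)`; then `u = ŷ / s` is a future unit timelike
vector, and the product `L` of the `b`-reflections in `e₀` and in `e₀ + u` is a `b`-isometry with
`L e₀ = u` and `|det L| = 1`. Being an isometry fixing the time orientation, `L` preserves `C`,
and `⟪L x, y⟫ = s · b(L x, L e₀) = s x₀`. Hence `L` maps the cone `{x ∈ C | x₀ ≤ 1/s}` of height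
`1/s` over `B^d` onto the truncated cone without changing volumes, and slicing at each height
gives that cone the volume `β_d (1/s)^(d+1) / (d+1)`.
-/

open scoped RealInnerProductSpace
open MeasureTheory

theorem LinearMap.abs_det_eq_one_of_mul_self {R M : Type*} [CommRing R] [LinearOrder R]
    [IsStrictOrderedRing R] [AddCommGroup M] [Module R M] {f : M →ₗ[R] M} (hf : f * f = 1) :
    |LinearMap.det f| = 1 := by
  have : LinearMap.det f * LinearMap.det f = 1 := by rw [← map_mul, hf, map_one]
  rcases mul_self_eq_one_iff.1 this with h | h <;> simp [h]

namespace MeasureTheory.Measure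

theorem addHaar_preimage_linearMap_of_abs_det_eq_one {E : Type*} [NormedAddCommGroup E]
    [NormedSpace ℝ E] [MeasurableSpace E] [BorelSpace E] [FiniteDimensional ℝ E] (μ : Measure E)
    [μ.IsAddHaarMeasure] {f : E →ₗ[ℝ] E} (hf : |LinearMap.det f| = 1) (s : Set E) :
    μ (f ⁻¹' s) = μ s := by
  have hf0 : LinearMap.det f ≠ 0 := fun h => by simp [h] at hf
  rw [addHaar_preimage_linearMap μ hf0, abs_inv, hf, inv_one, ENNReal.ofReal_one, one_mul]

end MeasureTheory.Measure

namespace LinearMap.BilinForm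

section Field

variable {K M : Type*} [Field K] [AddCommGroup M] [Module K M] (B : LinearMap.BilinForm K M)
  {v : M}

def orthoReflection (hv : B v v ≠ 0) : M ≃ₗ[K] M :=
  Module.reflection (x := v) (f := (2 / B v v) • B v) (by simp [hv])

variable {B}

theorem orthoReflection_apply (hv : B v v ≠ 0) (x : M) :
    B.orthoReflection hv x = x - (2 / B v v * B v x) • v := rfl

theorem orthoReflection_apply_self (hv : B v v ≠ 0) : B.orthoReflection hv v = -v :=
  Module.reflection_apply_self _

theorem orthoReflection_mul_self (hv : B v v ≠ 0) :
    (B.orthoReflection hv : M →ₗ[K] M) * B.orthoReflection hv = 1 :=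
  LinearMap.ext (Module.involutive_reflection _)

theorem apply_orthoReflection (hB : B.IsSymm) (hv : B v v ≠ 0) (x z : M) :
    B (B.orthoReflection hv x) (B.orthoReflection hv z) = B x z := by
  simp only [orthoReflection_apply, map_sub, map_smul, LinearMap.sub_apply, LinearMap.smul_apply,
    smul_eq_mul, hB.eq x v]
  field_simp
  ring

theorem orthoReflection_add_apply_left (hB : B.IsSymm) {a b : M} (hab : B a a = B b b)
    (h : B (a + b) (a + b) ≠ 0) : B.orthoReflection h a = -b := by
  have h' : B (a + b) (a + b) = 2 * B (a + b) a := by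
    simp only [map_add, LinearMap.add_apply, hab, hB.eq a b]
    ring
  have ha : B (a + b) a ≠ 0 := fun h0 => h (by rw [h', h0, mul_zero])
  have h2 : (2 : K) ≠ 0 := fun h0 => h (by rw [h', h0, zero_mul])
  have hcoeff : 2 / (2 * B (a + b) a) * B (a + b) a = 1 := by field_simp
  rw [orthoReflection_apply, h', hcoeff, one_smul]
  abel

end Field

variable {K M : Type*} [Field K] [LinearOrder K] [IsStrictOrderedRing K] [AddCommGroup M]
  [Module K M] {B : LinearMap.BilinForm K M}

theorem exists_isometry_apply_eq (hB : B.IsSymm) {a b : M} (ha : B a a ≠ 0)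
    (hab : B a a = B b b) (hab' : B (a + b) (a + b) ≠ 0) :
    ∃ L : M →ₗ[K] M, |LinearMap.det L| = 1 ∧ (∀ x z, B (L x) (L z) = B x z) ∧ L a = b := by
  refine ⟨(B.orthoReflection hab' : M →ₗ[K] M) * B.orthoReflection ha, ?_, fun x z => ?_, ?_⟩
  · rw [map_mul, abs_mul, abs_det_eq_one_of_mul_self (orthoReflection_mul_self _),
      abs_det_eq_one_of_mul_self (orthoReflection_mul_self _), one_mul]
  · simp only [Module.End.mul_apply, LinearEquiv.coe_coe, apply_orthoReflection hB]
  · simp only [Module.End.mul_apply, LinearEquiv.coe_coe]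
    rw [orthoReflection_apply_self, map_neg, orthoReflection_add_apply_left hB hab, neg_neg]

end LinearMap.BilinForm

namespace EuclideanSpace

theorem volume_preserving_zero_succ (d : ℕ) :
    MeasurePreserving (fun x : EuclideanSpace ℝ (Fin (d + 1)) =>
      (x 0, WithLp.toLp 2 fun i : Fin d => x i.succ)) :=
  ((MeasurePreserving.id volume).prod (PiLp.volume_preserving_toLp (Fin d))).comp
    ((volume_preserving_piFinSuccAbove (fun _ => ℝ) 0).comp (PiLp.volume_preserving_ofLp _))

theorem norm_le_iff_sum_sq_le {ι : Type*} [Fintype ι] (w : EuclideanSpace ℝ ι) (t : ℝ) :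
    ‖w‖ ≤ t ↔ 0 ≤ t ∧ ∑ i, w i ^ 2 ≤ t ^ 2 := by
  simp only [EuclideanSpace.norm_eq, Real.norm_eq_abs, sq_abs, Real.sqrt_le_iff]

end EuclideanSpace

theorem lintegral_Icc_ofReal_pow {h : ℝ} (hh : 0 ≤ h) (n : ℕ) :
    ∫⁻ t in Set.Icc 0 h, ENNReal.ofReal (t ^ n) = ENNReal.ofReal (h ^ (n + 1) / (n + 1)) := by
  rw [← ofReal_integral_eq_lintegral_ofReal (continuous_pow n).integrableOn_Icc
    ((ae_restrict_mem measurableSet_Icc).mono fun t ht => pow_nonneg ht.1 n),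
    integral_Icc_eq_integral_Ioc, ← intervalIntegral.integral_of_le hh, integral_pow]
  simp

def minkowskiForm (d : ℕ) : LinearMap.BilinForm ℝ (EuclideanSpace ℝ (Fin (d + 1))) :=
  LinearMap.mk₂ ℝ (fun x z => x 0 * z 0 - ∑ i : Fin d, x i.succ * z i.succ)
    (fun _ _ _ => by simp only [PiLp.add_apply, add_mul, Finset.sum_add_distrib]; ring)
    (fun _ _ _ => by simp only [PiLp.smul_apply, smul_eq_mul, mul_sub, Finset.mul_sum]; ring_nf)
    (fun _ _ _ => by simp only [PiLp.add_apply, mul_add, Finset.sum_add_distrib]; ring)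
    (fun _ _ _ => by simp only [PiLp.smul_apply, smul_eq_mul, mul_sub, Finset.mul_sum]; ring_nf)

def lightCone (d : ℕ) : Set (EuclideanSpace ℝ (Fin (d + 1))) :=
  {z | 0 ≤ z 0 ∧ ∑ i : Fin d, (z i.succ) ^ 2 ≤ (z 0) ^ 2}

variable {d : ℕ}

def spaceInversion (y : EuclideanSpace ℝ (Fin (d + 1))) : EuclideanSpace ℝ (Fin (d + 1)) :=
  WithLp.toLp 2 (Fin.cons (y 0) fun i => -y i.succ)

namespace minkowskiForm

theorem apply (x z : EuclideanSpace ℝ (Fin (d + 1))) :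
    minkowskiForm d x z = x 0 * z 0 - ∑ i : Fin d, x i.succ * z i.succ := rfl

theorem apply_self (x : EuclideanSpace ℝ (Fin (d + 1))) :
    minkowskiForm d x x = x 0 ^ 2 - ∑ i : Fin d, x i.succ ^ 2 := by
  simp only [apply, sq]

theorem isSymm : (minkowskiForm d).IsSymm :=
  ⟨fun x z => by simp only [apply, mul_comm]⟩

theorem apply_single_zero (x : EuclideanSpace ℝ (Fin (d + 1))) :
    minkowskiForm d x (EuclideanSpace.single 0 1) = x 0 := by
  simp [apply, Fin.succ_ne_zero]

theorem single_zero_self :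
    minkowskiForm d (EuclideanSpace.single 0 1) (EuclideanSpace.single 0 1) = 1 := by
  simp [apply_single_zero]

theorem apply_spaceInversion (x y : EuclideanSpace ℝ (Fin (d + 1))) :
    minkowskiForm d x (spaceInversion y) = ⟪x, y⟫ := by
  simp [apply, spaceInversion, PiLp.inner_apply, Fin.sum_univ_succ, mul_comm]

theorem spaceInversion_self (y : EuclideanSpace ℝ (Fin (d + 1))) :
    minkowskiForm d (spaceInversion y) (spaceInversion y) = minkowskiForm d y y := by
  simp [apply, spaceInversion]

end minkowskiForm

theorem mem_lightCone_iff {v : EuclideanSpace ℝ (Fin (d + 1))} (hv0 : 0 < v 0)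
    (hv : 0 < minkowskiForm d v v) {x : EuclideanSpace ℝ (Fin (d + 1))} :
    x ∈ lightCone d ↔ 0 ≤ minkowskiForm d x x ∧ 0 ≤ minkowskiForm d x v := by
  rw [minkowskiForm.apply_self, sub_pos] at hv
  rw [minkowskiForm.apply_self, minkowskiForm.apply, sub_nonneg, sub_nonneg, and_comm]
  set p := ∑ i : Fin d, x i.succ * v i.succ
  set X := ∑ i : Fin d, x i.succ ^ 2
  set V := ∑ i : Fin d, v i.succ ^ 2
  have hcs : p ^ 2 ≤ X * V := Finset.sum_mul_sq_le_sq_mul_sq _ _ _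
  have hV : 0 ≤ V := Finset.sum_nonneg fun i _ => sq_nonneg _
  refine and_congr_left fun hX => ⟨fun hx0 => ?_, fun hp => ?_⟩
  · have : p ^ 2 ≤ (x 0 * v 0) ^ 2 := by
      nlinarith [mul_le_mul hX hv.le hV (sq_nonneg (x 0))]
    exact (abs_le_of_sq_le_sq' this (by positivity)).2
  · by_contra! hx0
    have : p ^ 2 < (x 0 * v 0) ^ 2 := by
      nlinarith [mul_lt_mul_of_pos_left hv (pow_pos (neg_pos.2 hx0) 2)]
    nlinarith [mul_neg_of_neg_of_pos hx0 hv0]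

theorem pos_of_mem_interior_lightCone {y : EuclideanSpace ℝ (Fin (d + 1))}
    (hy : y ∈ interior (lightCone d)) : 0 < y 0 ∧ 0 < minkowskiForm d y y := by
  obtain ⟨ε, hε, hball⟩ := Metric.mem_nhds_iff.1 (mem_interior_iff_mem_nhds.1 hy)
  have hz : y - (ε / 2) • EuclideanSpace.single 0 1 ∈ lightCone d := by
    apply hball
    rw [Metric.mem_ball, dist_eq_norm, sub_sub_cancel_left, norm_neg, norm_smul,
      PiLp.norm_single, norm_one, mul_one, Real.norm_of_nonneg (by positivity)]
    linarith
  obtain ⟨hz0, hz⟩ := hz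
  simp only [PiLp.sub_apply, PiLp.smul_apply, PiLp.single_apply, Fin.succ_ne_zero,
    if_true, if_false, smul_eq_mul, mul_one, mul_zero, sub_zero] at hz0 hz
  rw [minkowskiForm.apply_self]
  constructor <;> nlinarith

theorem exists_isometry_smul_apply_single_zero {y : EuclideanSpace ℝ (Fin (d + 1))}
    (hy0 : 0 < y 0) (hyy : 0 < minkowskiForm d y y) :
    ∃ L : EuclideanSpace ℝ (Fin (d + 1)) →ₗ[ℝ] EuclideanSpace ℝ (Fin (d + 1)),
      |LinearMap.det L| = 1 ∧ (∀ x z, minkowskiForm d (L x) (L z) = minkowskiForm d x z) ∧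
      √(minkowskiForm d y y) • L (EuclideanSpace.single 0 1) = y := by
  set s := √(minkowskiForm d y y)
  have hs : 0 < s := Real.sqrt_pos.2 hyy
  have hss : s ^ 2 = minkowskiForm d y y := Real.sq_sqrt hyy.le
  set u := s⁻¹ • y
  have huu : minkowskiForm d u u = 1 := by
    simp only [u, map_smul, LinearMap.smul_apply, smul_eq_mul, ← hss]
    field_simp
  have hu0 : 0 < u 0 := by simp only [u, PiLp.smul_apply, smul_eq_mul]; positivity
  have hsum : minkowskiForm d (EuclideanSpace.single 0 1 + u) (EuclideanSpace.single 0 1 + u)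
      = 2 + 2 * u 0 := by
    simp only [map_add, LinearMap.add_apply, huu, minkowskiForm.apply_single_zero,
      PiLp.single_apply, if_pos]
    rw [minkowskiForm.isSymm.eq, minkowskiForm.apply_single_zero]
    ring
  obtain ⟨L, hdet, hL, hLe⟩ := LinearMap.BilinForm.exists_isometry_apply_eq minkowskiForm.isSymm
    (by simp [minkowskiForm.single_zero_self]) (minkowskiForm.single_zero_self.trans huu.symm)
    (by rw [hsum]; positivity)
  exact ⟨L, hdet, hL, by rw [hLe, smul_inv_smul₀ hs.ne']⟩

theorem preimage_lightCone {L : EuclideanSpace ℝ (Fin (d + 1)) →ₗ[ℝ] EuclideanSpace ℝ (Fin (d + 1))}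
    (hL : ∀ x z, minkowskiForm d (L x) (L z) = minkowskiForm d x z)
    (hL0 : 0 < L (EuclideanSpace.single 0 1) 0) :
    L ⁻¹' lightCone d = lightCone d := by
  have he := minkowskiForm.single_zero_self (d := d)
  ext x
  rw [Set.mem_preimage, mem_lightCone_iff hL0 (by rw [hL, he]; exact one_pos), hL, hL,
    mem_lightCone_iff (v := EuclideanSpace.single 0 1) (by simp) (by rw [he]; exact one_pos)]

theorem preimage_lightCone_sep_inner_le_one
    {L : EuclideanSpace ℝ (Fin (d + 1)) →ₗ[ℝ] EuclideanSpace ℝ (Fin (d + 1))}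
    (hL : ∀ x z, minkowskiForm d (L x) (L z) = minkowskiForm d x z) {s : ℝ} (hs : 0 < s)
    {y : EuclideanSpace ℝ (Fin (d + 1))} (hy0 : 0 < y 0)
    (hLy : s • L (EuclideanSpace.single 0 1) = spaceInversion y) :
    L ⁻¹' {x ∈ lightCone d | ⟪x, y⟫ ≤ 1} = {x ∈ lightCone d | x 0 ≤ 1 / s} := by
  have hL0 : 0 < L (EuclideanSpace.single 0 1) 0 := by
    have := congrArg (· 0) hLy
    simp only [PiLp.smul_apply, smul_eq_mul, spaceInversion, Fin.cons_zero] at this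
    exact pos_of_mul_pos_right (this ▸ hy0) hs.le
  ext x
  have hinner : ⟪L x, y⟫ = s * x 0 := by
    rw [← minkowskiForm.apply_spaceInversion, ← hLy, map_smul, hL,
      minkowskiForm.apply_single_zero, smul_eq_mul]
  rw [Set.mem_preimage, Set.mem_ofPred_eq, Set.mem_ofPred_eq, hinner, le_div_iff₀' hs,
    ← Set.mem_preimage, preimage_lightCone hL hL0]

theorem volume_lightCone_sep_le {h : ℝ} (hh : 0 ≤ h) :
    volume {x ∈ lightCone d | x 0 ≤ h}
      = ENNReal.ofReal (h ^ (d + 1) / (d + 1))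
          * volume (Metric.ball (0 : EuclideanSpace ℝ (Fin d)) 1) := by
  set K : Set (ℝ × EuclideanSpace ℝ (Fin d)) := {q | q.1 ∈ Set.Icc 0 h ∧ ‖q.2‖ ≤ q.1}
  have hK : MeasurableSet K :=
    ((isClosed_Icc.preimage continuous_fst).inter
      (isClosed_le (continuous_norm.comp continuous_snd) continuous_fst)).measurableSet
  have hslice (t : ℝ) : volume (Prod.mk t ⁻¹' K) = (Set.Icc 0 h).indicator
      (fun t => ENNReal.ofReal (t ^ d) * volume (Metric.ball (0 : EuclideanSpace ℝ (Fin d)) 1))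
      t := by
    by_cases ht : t ∈ Set.Icc 0 h
    · have : Prod.mk t ⁻¹' K = Metric.closedBall 0 t := by
        ext w
        simp only [K, Set.mem_preimage, Set.mem_ofPred_eq, mem_closedBall_zero_iff]
        exact and_iff_right ht
      rw [this, Set.indicator_of_mem ht, Measure.addHaar_closedBall _ _ ht.1,
        finrank_euclideanSpace_fin]
    · have : Prod.mk t ⁻¹' K = ∅ := Set.eq_empty_of_forall_notMem fun _ hw => ht hw.1
      rw [this, Set.indicator_of_notMem ht, measure_empty]
  calc _ = volume K := by
        rw [← (EuclideanSpace.volume_preserving_zero_succ d).measure_preimage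
          hK.nullMeasurableSet]
        congr 1
        ext x
        simp only [lightCone, Set.mem_ofPred_eq, Set.mem_preimage, K, Set.mem_Icc,
          EuclideanSpace.norm_le_iff_sum_sq_le]
        tauto
    _ = ∫⁻ t in Set.Icc 0 h, ENNReal.ofReal (t ^ d)
          * volume (Metric.ball (0 : EuclideanSpace ℝ (Fin d)) 1) := by
        rw [Measure.volume_eq_prod, Measure.prod_apply hK, lintegral_congr hslice,
          lintegral_indicator measurableSet_Icc]
    _ = _ := by rw [lintegral_mul_const _ (by fun_prop), lintegral_Icc_ofReal_pow hh]

theorem volume_truncated_light_cone_general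
    (d : ℕ)
    (C : Set (EuclideanSpace ℝ (Fin (d + 1))))
    (hCdef : C = {z : EuclideanSpace ℝ (Fin (d + 1)) |
      0 ≤ z 0 ∧ ∑ i : Fin d, (z i.succ) ^ 2 ≤ (z 0) ^ 2})
    (y : EuclideanSpace ℝ (Fin (d + 1))) (hy : y ∈ interior C) :
    volume {x ∈ C | ⟪x, y⟫ ≤ 1}
      = ENNReal.ofReal
          ((volume (Metric.ball (0 : EuclideanSpace ℝ (Fin d)) 1)).toReal
            / ((d + 1) *
              Real.sqrt ((y 0) ^ 2 - ∑ i : Fin d, (y i.succ) ^ 2) ^ (d + 1))) := by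
  change C = lightCone d at hCdef
  subst hCdef
  obtain ⟨hy0, hyy⟩ := pos_of_mem_interior_lightCone hy
  rw [← minkowskiForm.apply_self, ← minkowskiForm.spaceInversion_self]
  rw [← minkowskiForm.spaceInversion_self] at hyy
  set s := √(minkowskiForm d (spaceInversion y) (spaceInversion y))
  have hs : 0 < s := Real.sqrt_pos.2 hyy
  obtain ⟨L, hdet, hL, hLy⟩ := exists_isometry_smul_apply_single_zero (y := spaceInversion y)
    (by simpa [spaceInversion] using hy0) hyy
  rw [← Measure.addHaar_preimage_linearMap_of_abs_det_eq_one volume hdet,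
    preimage_lightCone_sep_inner_le_one hL hs hy0 hLy, volume_lightCone_sep_le (by positivity)]
  have : (1 / s) ^ (d + 1) / (d + 1) = ((d + 1) * s ^ (d + 1))⁻¹ := by
    rw [one_div_pow, div_div, one_div, mul_comm]
  rw [this, div_eq_mul_inv, ENNReal.ofReal_mul ENNReal.toReal_nonneg,
    ENNReal.ofReal_toReal measure_ball_lt_top.ne, mul_comm]

/-- for the light cone `C = {y : y₀ ≥ 0, y₀² ≥ y₁² + ⋯ + y_d²}`
in `ℝ^{d+1}` and `y ∈ int C`, the volume of the truncation `{x ∈ C : ⟨x,y⟩ ≤ 1}`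
equals `β_d / ((d+1)‖y‖_{1,d}^{d+1})`, where `β_d` is the volume of the unit
`d`-ball and `‖y‖_{1,d} = √(y₀² - y₁² - ⋯ - y_d²)`. -/
theorem volume_truncated_light_cone
    (d : ℕ) (hd : 1 ≤ d)
    (C : Set (EuclideanSpace ℝ (Fin (d + 1))))
    (hCdef : C = {z : EuclideanSpace ℝ (Fin (d + 1)) |
      0 ≤ z 0 ∧ ∑ i : Fin d, (z i.succ) ^ 2 ≤ (z 0) ^ 2})
    (y : EuclideanSpace ℝ (Fin (d + 1))) (hy : y ∈ interior C) :
    volume {x ∈ C | ⟪x, y⟫ ≤ 1}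
      = ENNReal.ofReal
          ((volume (Metric.ball (0 : EuclideanSpace ℝ (Fin d)) 1)).toReal
            / ((d + 1) *
              Real.sqrt ((y 0) ^ 2 - ∑ i : Fin d, (y i.succ) ^ 2) ^ (d + 1))) :=
  volume_truncated_light_cone_general d C hCdef y hy
end

section
/- Let a_1 < a_2 < b_2 < b_1 be real numbers and κ ∈ (0,1). If the cross-ratio cr(b_2, a_2; a_1, b_1) = ((b_2-a_1)(a_2-b_1))/((b_2-b_1)(a_2-a_1)) is less than (1+κ)²/(1-κ)², then (b_2 - a_2)/(b_1 - a_1) < κ. -/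
/-- if `a₁ < a₂ < b₂ < b₁` and the cross-ratio
`cr(b₂,a₂;a₁,b₁) = ((b₂-a₁)(a₂-b₁))/((b₂-b₁)(a₂-a₁))` is less than
`(1+κ)²/(1-κ)²` with `κ ∈ (0,1)`, then `(b₂-a₂)/(b₁-a₁) < κ`. -/
theorem crossRatio_bound_implies_width_bound
    (a₁ a₂ b₂ b₁ κ : ℝ) (h1 : a₁ < a₂) (h2 : a₂ < b₂) (h3 : b₂ < b₁)
    (hκ : κ ∈ Set.Ioo (0 : ℝ) 1)
    (hcr : ((b₂ - a₁) * (a₂ - b₁)) / ((b₂ - b₁) * (a₂ - a₁))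
      < (1 + κ) ^ 2 / (1 - κ) ^ 2) :
    (b₂ - a₂) / (b₁ - a₁) < κ := by
  obtain ⟨hκ0, hκ1⟩ := hκ
  have hL : 0 < b₁ - a₁ := by linarith
  have hden : 0 < (b₁ - b₂) * (a₂ - a₁) := by
    apply mul_pos <;> linarith
  have e : ((b₂ - a₁) * (a₂ - b₁)) / ((b₂ - b₁) * (a₂ - a₁))
      = ((b₂ - a₁) * (b₁ - a₂)) / ((b₁ - b₂) * (a₂ - a₁)) := by
    rw [← neg_div_neg_eq]; ring_nf
  rw [e] at hcr
  have hk2 : 0 < (1 - κ) ^ 2 := pow_pos (by linarith) 2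
  have hcr' := (div_lt_div_iff₀ hden hk2).mp hcr
  by_contra h
  push_neg at h
  have hw : κ * (b₁ - a₁) ≤ b₂ - a₂ := (le_div_iff₀ hL).mp h
  have key1 : (b₂ - a₂) * (b₁ - a₁) * (1 - κ) ^ 2
      < 4 * κ * ((b₁ - b₂) * (a₂ - a₁)) := by nlinarith [hcr']
  have key2 : 4 * κ * ((b₁ - b₂) * (a₂ - a₁))
      ≤ κ * ((b₁ - a₁) - (b₂ - a₂)) ^ 2 := by
    nlinarith [mul_nonneg hκ0.le (sq_nonneg ((b₁ - b₂) - (a₂ - a₁)))]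
  have key3 : κ * ((b₁ - a₁) - (b₂ - a₂)) ^ 2
      ≤ (b₂ - a₂) * (b₁ - a₁) * (1 - κ) ^ 2 := by
    nlinarith [mul_nonneg (sub_nonneg.2 hw)
      (by nlinarith : (0:ℝ) ≤ (b₁ - a₁) * (1 - κ) ^ 2
        + κ * (2 * (b₁ - a₁) - (b₂ - a₂) - κ * (b₁ - a₁)))]
  linarith
end

section
/- Let D ⊂ R^d be an open bounded convex set and F : D → R a smooth function such that F(y) → +∞ as y approaches ∂D, and such that the Hessian D²F(y) is positive definite at every critical point of F. Then F has exactly one critical point. -/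
open Filter
open Metric Set
set_option maxHeartbeats 1600000
set_option linter.unusedSectionVars false
set_option linter.unusedVariables false

variable {E : Type*} [NormedAddCommGroup E] [InnerProductSpace ℝ E] [FiniteDimensional ℝ E]

lemma lem_sublevel_compact (D : Set E) (hDopen : IsOpen D) (hDbdd : Bornology.IsBounded D)
    (F : E → ℝ) (hF : ContinuousOn F D)
    (hco : ∀ z ∈ frontier D, Tendsto F (nhdsWithin z D) atTop)
    {s : Set ℝ} (hs : IsClosed s) (a : ℝ) (hsa : s ⊆ Set.Iic a) :
    IsCompact {x ∈ D | F x ∈ s} := by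
  set T := {x ∈ D | F x ∈ s} with hT
  have hTD : T ⊆ D := fun x hx => hx.1
  refine isCompact_of_isClosed_isBounded ?_ (hDbdd.subset hTD)
  rw [← closure_subset_iff_isClosed]
  intro z hz
  have hzD : z ∈ closure D := closure_mono hTD hz
  have hne : (nhdsWithin z T).NeBot := mem_closure_iff_nhdsWithin_neBot.1 hz
  by_cases hzd : z ∈ D
  · have hct : ContinuousWithinAt F T z := (hF.continuousWithinAt hzd).mono hTD
    have hmem : F z ∈ s := by
      refine hs.mem_of_tendsto hct ?_
      filter_upwards [self_mem_nhdsWithin] with x hx using hx.2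
    exact ⟨hzd, hmem⟩
  · exfalso
    have hzf : z ∈ frontier D := by
      rw [frontier, hDopen.interior_eq]
      exact ⟨hzD, hzd⟩
    have h1 : Tendsto F (nhdsWithin z T) atTop :=
      (hco z hzf).mono_left (nhdsWithin_mono z hTD)
    have h2 : ∀ᶠ x in nhdsWithin z T, a < F x := h1.eventually_gt_atTop a
    have h3 : ∀ᶠ x in nhdsWithin z T, F x ≤ a := by
      filter_upwards [self_mem_nhdsWithin] with x hx using hsa hx.2
    obtain ⟨x, hxa, hxb⟩ := (h2.and h3).exists
    exact absurd hxb (not_le.2 hxa)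

lemma lem_exists_min (D : Set E) (hDopen : IsOpen D) (hDbdd : Bornology.IsBounded D)
    (hDne : D.Nonempty) (F : E → ℝ) (hF : ContinuousOn F D)
    (hco : ∀ z ∈ frontier D, Tendsto F (nhdsWithin z D) atTop)
    (hcomp : ∀ (a : ℝ), IsCompact {x ∈ D | F x ∈ Set.Iic a}) :
    ∃ y ∈ D, ∀ x ∈ D, F y ≤ F x := by
  obtain ⟨w, hw⟩ := hDne
  set a := F w with ha
  set T := {x ∈ D | F x ∈ Set.Iic a} with hT
  have hTc : IsCompact T := hcomp a
  have hTne : T.Nonempty := ⟨w, hw, le_refl a⟩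
  obtain ⟨y, hyT, hymin⟩ := hTc.exists_isMinOn hTne (hF.mono fun x hx => hx.1)
  refine ⟨y, hyT.1, fun x hx => ?_⟩
  by_cases hxa : F x ≤ a
  · exact hymin ⟨hx, hxa⟩
  · exact le_trans (hymin ⟨hw, le_refl a⟩) (le_of_not_ge hxa)

lemma line_hasDerivAt {G : Type*} [NormedAddCommGroup G] [NormedSpace ℝ G]
    (g : E → G) (x v : E) (t : ℝ) (hg : DifferentiableAt ℝ g (x + t • v)) :
    HasDerivAt (fun s : ℝ => g (x + s • v)) (fderiv ℝ g (x + t • v) v) t := by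
  have hline : HasDerivAt (fun s : ℝ => x + s • v) v t := by
    simpa using ((hasDerivAt_id t).smul_const v).const_add x
  exact hg.hasFDerivAt.comp_hasDerivAt t hline

lemma hess_eq (D : Set E) (hDopen : IsOpen D) (F : E → ℝ) (hsmooth : ContDiffOn ℝ (⊤ : ℕ∞) F D)
    {y : E} (hy : y ∈ D) (u : E) :
    fderiv ℝ (fun z => fderiv ℝ F z u) y u = fderiv ℝ (fderiv ℝ F) y u u := by
  have hdf : DifferentiableAt ℝ (fderiv ℝ F) y :=
    (((hsmooth.fderiv_of_isOpen (m := (⊤ : ℕ∞)) hDopen (by simp))).contDiffAt (hDopen.mem_nhds hy)).differentiableAt (by simp)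
  rw [fderiv_clm_apply hdf (differentiableAt_const u)]
  simp

lemma lem_strict_local [Nontrivial E] (D : Set E) (hDopen : IsOpen D) (F : E → ℝ)
    (hsmooth : ContDiffOn ℝ (⊤ : ℕ∞) F D)
    {x₀ : E} (hx₀ : x₀ ∈ D) (hcrit : fderiv ℝ F x₀ = 0)
    (hpos : ∀ u : E, u ≠ 0 → 0 < fderiv ℝ (fun z => fderiv ℝ F z u) x₀ u) :
    ∃ r > 0, closedBall x₀ r ⊆ D ∧
      ∀ z ∈ closedBall x₀ r, z ≠ x₀ → F x₀ < F z ∧ fderiv ℝ F z ≠ 0 := by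
  set f' := fderiv ℝ F with hf'
  have hf'cd : ContDiffOn ℝ (⊤ : ℕ∞) f' D := hsmooth.fderiv_of_isOpen hDopen (by simp)
  set f'' := fderiv ℝ f' with hf''def
  have hdF : ∀ z ∈ D, DifferentiableAt ℝ F z := fun z hz =>
    (hsmooth.contDiffAt (hDopen.mem_nhds hz)).differentiableAt (by simp)
  have hdf' : ∀ z ∈ D, DifferentiableAt ℝ f' z := fun z hz =>
    (hf'cd.contDiffAt (hDopen.mem_nhds hz)).differentiableAt (by simp)
  have hf''cont : ContinuousOn f'' D := hf'cd.continuousOn_fderiv_of_isOpen hDopen (by simp)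
  have hQpos : ∀ u : E, u ≠ 0 → 0 < f'' x₀ u u := by
    intro u hu
    have := hpos u hu
    rwa [hess_eq D hDopen F hsmooth hx₀ u] at this
  have hess' : ∀ y ∈ D, ∀ u : E, fderiv ℝ (fun z => f' z u) y = (f'' y).flip u := by
    intro y hy u
    rw [fderiv_clm_apply ((hf'cd.contDiffAt (hDopen.mem_nhds hy)).differentiableAt (by simp))
      (differentiableAt_const u)]
    simp [hf''def]
  clear_value f''
  clear_value f'
  clear hpos
  -- min of the quadratic form on the unit sphere
  have hsph : (sphere (0:E) 1).Nonempty := NormedSpace.sphere_nonempty.2 zero_le_one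
  have hQcont : ContinuousOn (fun u => f'' x₀ u u) (sphere (0:E) 1) :=
    ((f'' x₀).continuous.clm_apply continuous_id).continuousOn
  obtain ⟨u₀, hu₀, hminu⟩ := (isCompact_sphere (0:E) 1).exists_isMinOn hsph hQcont
  set μ := f'' x₀ u₀ u₀ with hμdef
  have hu₀ne : u₀ ≠ 0 := by
    intro h
    rw [mem_sphere_zero_iff_norm, h, norm_zero] at hu₀
    exact one_ne_zero hu₀.symm
  have hμ : 0 < μ := hQpos u₀ hu₀ne
  -- radius
  obtain ⟨ε, hε, hballD⟩ := Metric.isOpen_iff.1 hDopen x₀ hx₀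
  have hcontat : ContinuousAt f'' x₀ := hf''cont.continuousAt (hDopen.mem_nhds hx₀)
  obtain ⟨δ, hδ, hδb⟩ := (Metric.continuousAt_iff (f := f'')).1 hcontat (μ/2) (by linarith)
  set r := min (δ/2) (ε/2) with hrdef
  have hr : 0 < r := lt_min (by linarith) (by linarith)
  have hballsub : closedBall x₀ r ⊆ D := by
    refine subset_trans ?_ hballD
    intro z hz
    have := mem_closedBall.1 hz
    exact mem_ball.2 (lt_of_le_of_lt this (lt_of_le_of_lt (min_le_right _ _) (by linarith)))
  have hf''near : ∀ z ∈ closedBall x₀ r, ‖f'' z - f'' x₀‖ < μ/2 := by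
    intro z hz
    have hd : dist z x₀ < δ :=
      lt_of_le_of_lt (mem_closedBall.1 hz) (lt_of_le_of_lt (min_le_left _ _) (by linarith))
    have := hδb hd
    exact lt_of_eq_of_lt (dist_eq_norm (f'' z) (f'' x₀)).symm this
  -- uniform positivity
  have hQ : ∀ z ∈ closedBall x₀ r, ∀ u : E, μ/2 * ‖u‖^2 ≤ f'' z u u := by
    intro z hz u
    rcases eq_or_ne u 0 with rfl | hu
    · simp
    · have hcpos : 0 < ‖u‖ := norm_pos_iff.2 hu
      set w := ‖u‖⁻¹ • u with hw
      have hwnorm : ‖w‖ = 1 := by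
        rw [hw, norm_smul, norm_inv, norm_norm, inv_mul_cancel₀ (ne_of_gt hcpos)]
      have hwmem : w ∈ sphere (0:E) 1 := mem_sphere_zero_iff_norm.2 hwnorm
      have h1 : μ ≤ f'' x₀ w w := hminu hwmem
      have h2 : |f'' z w w - f'' x₀ w w| ≤ ‖f'' z - f'' x₀‖ := by
        have e1 : f'' z w w - f'' x₀ w w = ((f'' z - f'' x₀) w) w := by
          simp [ContinuousLinearMap.sub_apply]
        rw [e1]
        calc |((f'' z - f'' x₀) w) w| ≤ ‖(f'' z - f'' x₀) w‖ * ‖w‖ :=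
              ((f'' z - f'' x₀) w).le_opNorm w
          _ ≤ ‖f'' z - f'' x₀‖ * ‖w‖ * ‖w‖ :=
              mul_le_mul_of_nonneg_right ((f'' z - f'' x₀).le_opNorm w) (norm_nonneg w)
          _ = ‖f'' z - f'' x₀‖ := by rw [hwnorm]; ring
      have h3 : μ/2 ≤ f'' z w w := by
        have := abs_le.1 h2
        have h4 := hf''near z hz
        linarith [this.1]
      have huw : u = ‖u‖ • w := by
        rw [hw, smul_smul, mul_inv_cancel₀ (ne_of_gt hcpos), one_smul]
      have hexp : f'' z u u = ‖u‖^2 * (f'' z w w) := by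
        conv_lhs => rw [huw]
        simp [map_smul, smul_eq_mul]
        ring
      rw [hexp]
      have hmm := mul_le_mul_of_nonneg_right h3 (sq_nonneg ‖u‖)
      linarith
  refine ⟨r, hr, hballsub, ?_⟩
  intro z hz hzne
  set v := z - x₀ with hv
  have hvne : v ≠ 0 := sub_ne_zero.2 hzne
  have hvnorm : ‖v‖ ≤ r := by rw [hv, ← dist_eq_norm]; exact mem_closedBall.1 hz
  have hseg : ∀ t ∈ Icc (0:ℝ) 1, x₀ + t • v ∈ closedBall x₀ r := by
    intro t ht
    rw [mem_closedBall, dist_eq_norm, add_sub_cancel_left, norm_smul, Real.norm_eq_abs,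
      abs_of_nonneg ht.1]
    calc t * ‖v‖ ≤ 1 * ‖v‖ := mul_le_mul_of_nonneg_right ht.2 (norm_nonneg v)
      _ ≤ r := by rw [one_mul]; exact hvnorm
  have hsegD : ∀ t ∈ Icc (0:ℝ) 1, x₀ + t • v ∈ D := fun t ht => hballsub (hseg t ht)
  set ψ := fun t : ℝ => f' (x₀ + t • v) v with hψ
  have hψder : ∀ t ∈ Icc (0:ℝ) 1, HasDerivAt ψ (f'' (x₀ + t • v) v v) t := by
    intro t ht
    have hp := hsegD t ht
    have hgd : DifferentiableAt ℝ (fun y => f' y v) (x₀ + t • v) :=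
      (hdf' _ hp).clm_apply (differentiableAt_const v)
    have h := line_hasDerivAt (fun y => f' y v) x₀ v t hgd
    have he : fderiv ℝ (fun y => f' y v) (x₀ + t • v) v = f'' (x₀ + t • v) v v := by
      rw [hess' _ hp v]
      rfl
    rwa [he] at h
  have hψcont : ContinuousOn ψ (Icc 0 1) := fun t ht =>
    ((hψder t ht).continuousAt).continuousWithinAt
  have hψmono : StrictMonoOn ψ (Icc 0 1) := by
    refine strictMonoOn_of_deriv_pos (convex_Icc 0 1) hψcont ?_
    intro t ht
    rw [interior_Icc] at ht
    have ht' : t ∈ Icc (0:ℝ) 1 := ⟨le_of_lt ht.1, le_of_lt ht.2⟩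
    rw [(hψder t ht').deriv]
    calc (0:ℝ) < μ/2 * ‖v‖^2 :=
          mul_pos (by linarith) (pow_pos (norm_pos_iff.2 hvne) 2)
      _ ≤ f'' (x₀ + t • v) v v := hQ _ (hseg t ht') v
  have hψ0 : ψ 0 = 0 := by
    have e : ψ 0 = (f' x₀) v := by simp [hψ]
    rw [e, hcrit]
    simp
  have hψpos : ∀ t ∈ Icc (0:ℝ) 1, t ≠ 0 → 0 < ψ t := by
    intro t ht htne
    have : ψ 0 < ψ t := hψmono (by norm_num) ht (lt_of_le_of_ne ht.1 (Ne.symm htne))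
    rwa [hψ0] at this
  have hz1 : x₀ + (1:ℝ) • v = z := by rw [one_smul, hv]; abel
  constructor
  · -- F x₀ < F z via φ
    set φ := fun t : ℝ => F (x₀ + t • v) with hφ
    have hφder : ∀ t ∈ Icc (0:ℝ) 1, HasDerivAt φ (ψ t) t := by
      intro t ht
      have e : ψ t = (fderiv ℝ F (x₀ + t • v)) v := by simp only [hψ, hf']
      rw [e]
      exact line_hasDerivAt F x₀ v t (hdF _ (hsegD t ht))
    have hφmono : StrictMonoOn φ (Icc 0 1) := by
      refine strictMonoOn_of_deriv_pos (convex_Icc 0 1) (fun t ht =>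
        ((hφder t ht).continuousAt).continuousWithinAt) ?_
      intro t ht
      rw [interior_Icc] at ht
      have ht' : t ∈ Icc (0:ℝ) 1 := ⟨le_of_lt ht.1, le_of_lt ht.2⟩
      rw [(hφder t ht').deriv]
      exact hψpos t ht' (ne_of_gt ht.1)
    have h10 : φ 0 < φ 1 := hφmono (show (0:ℝ) ∈ Icc (0:ℝ) 1 by norm_num)
      (show (1:ℝ) ∈ Icc (0:ℝ) 1 by norm_num) zero_lt_one
    have e0 : φ 0 = F x₀ := by simp [hφ]
    have e1 : φ 1 = F z := by
      show F (x₀ + (1:ℝ) • v) = F z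
      rw [hz1]
    rw [e0, e1] at h10
    exact h10
  · -- fderiv F z ≠ 0
    have h1 : 0 < ψ 1 := hψpos 1 (by norm_num) one_ne_zero
    intro hzero
    have e1 : ψ 1 = (f' z) v := by
      show (f' (x₀ + (1:ℝ) • v)) v = (f' z) v
      rw [hz1]
    rw [e1, hzero] at h1
    simp at h1

lemma lem_taylor (D : Set E) (hDopen : IsOpen D) (F : E → ℝ)
    (hsmooth : ContDiffOn ℝ (⊤ : ℕ∞) F D) (K : Set E) (hK : IsCompact K) (hKD : K ⊆ D) :
    ∃ s₀ > 0, ∃ L M : ℝ, 0 ≤ L ∧ 0 ≤ M ∧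
      (∀ x ∈ K, ‖fderiv ℝ F x‖ ≤ M) ∧
      (∀ x ∈ K, ∀ v : E, ‖v‖ ≤ s₀ →
        x + v ∈ D ∧ F (x + v) ≤ F x + fderiv ℝ F x v + L * ‖v‖^2) := by
  have hf'cd : ContDiffOn ℝ (⊤ : ℕ∞) (fderiv ℝ F) D := hsmooth.fderiv_of_isOpen hDopen (by simp)
  have hdF : ∀ z ∈ D, DifferentiableAt ℝ F z := fun z hz =>
    (hsmooth.contDiffAt (hDopen.mem_nhds hz)).differentiableAt (by simp)
  have hdf' : ∀ z ∈ D, DifferentiableAt ℝ (fderiv ℝ F) z := fun z hz =>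
    (hf'cd.contDiffAt (hDopen.mem_nhds hz)).differentiableAt (by simp)
  have hf'cont : ContinuousOn (fderiv ℝ F) D := hf'cd.continuousOn
  have hf''cont : ContinuousOn (fderiv ℝ (fderiv ℝ F)) D :=
    hf'cd.continuousOn_fderiv_of_isOpen hDopen (by simp)
  obtain ⟨δ, hδ, hthick⟩ := hK.exists_thickening_subset_open hDopen hKD
  set s₀ := δ/2 with hs₀def
  have hs₀ : 0 < s₀ := by positivity
  set T := cthickening s₀ K with hTdef
  have hTD : T ⊆ D := subset_trans (cthickening_subset_thickening' hδ (by linarith) K) hthick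
  have hTc : IsCompact T := hK.cthickening
  obtain ⟨M₀, hM₀⟩ := hTc.exists_bound_of_continuousOn (hf'cont.mono hTD)
  obtain ⟨L₀, hL₀⟩ := hTc.exists_bound_of_continuousOn (f := fderiv ℝ (fderiv ℝ F)) (hf''cont.mono hTD)
  refine ⟨s₀, hs₀, max L₀ 0, max M₀ 0, le_max_right _ _, le_max_right _ _, ?_, ?_⟩
  · intro x hx
    exact le_trans (hM₀ x (self_subset_cthickening K hx)) (le_max_left _ _)
  · intro x hx v hv
    have hmemT : ∀ t : ℝ, t ∈ Icc (0:ℝ) 1 → x + t • v ∈ T := by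
      intro t ht
      apply mem_cthickening_of_dist_le (x + t • v) x s₀ K hx
      rw [dist_eq_norm, add_sub_cancel_left, norm_smul, Real.norm_eq_abs, abs_of_nonneg ht.1]
      calc t * ‖v‖ ≤ 1 * ‖v‖ := mul_le_mul_of_nonneg_right ht.2 (norm_nonneg v)
        _ ≤ s₀ := by rw [one_mul]; exact hv
    have hmemD : ∀ t : ℝ, t ∈ Icc (0:ℝ) 1 → x + t • v ∈ D := fun t ht => hTD (hmemT t ht)
    have hxv : x + v ∈ D := by simpa using hmemD 1 ⟨zero_le_one, le_refl 1⟩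
    refine ⟨hxv, ?_⟩
    -- MVT
    have hder : ∀ t ∈ Ioo (0:ℝ) 1, HasDerivAt (fun s : ℝ => F (x + s • v))
        (fderiv ℝ F (x + t • v) v) t := fun t ht =>
      line_hasDerivAt F x v t (hdF _ (hmemD t ⟨ht.1.le, ht.2.le⟩))
    have hcont : ContinuousOn (fun s : ℝ => F (x + s • v)) (Icc 0 1) := by
      intro t ht
      exact ((hsmooth.continuousOn.comp (by fun_prop : Continuous fun s : ℝ => x + s • v).continuousOn
        (fun s hs => hmemD s hs)).continuousWithinAt ht)
    obtain ⟨τ, hτ, hslope⟩ := exists_hasDerivAt_eq_slope (fun s : ℝ => F (x + s • v))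
      (fun t => fderiv ℝ F (x + t • v) v) zero_lt_one hcont hder
    have hτI : τ ∈ Icc (0:ℝ) 1 := ⟨hτ.1.le, hτ.2.le⟩
    have heq : F (x + v) - F x = fderiv ℝ F (x + τ • v) v := by
      have := hslope
      simp only [one_smul, zero_smul, add_zero] at this
      rw [this]
      ring
    -- Lipschitz bound on the segment
    have hlip : ‖fderiv ℝ F (x + τ • v) - fderiv ℝ F x‖ ≤ max L₀ 0 * ‖τ • v‖ := by
      have hsegsub : segment ℝ x (x + v) ⊆ T := by
        intro y hy
        rw [segment_eq_image'] at hy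
        obtain ⟨t, ht, rfl⟩ := hy
        simpa using hmemT t ht
      have := Convex.norm_image_sub_le_of_norm_hasFDerivWithin_le
        (f := fderiv ℝ F) (f' := fderiv ℝ (fderiv ℝ F)) (s := segment ℝ x (x + v))
        (C := max L₀ 0) (y := x + τ • v)
        (fun y hy => ((hdf' y (hTD (hsegsub hy))).hasFDerivAt).hasFDerivWithinAt)
        (fun y hy => le_trans (hL₀ y (hsegsub hy)) (le_max_left _ _))
        (convex_segment _ _) (left_mem_segment ℝ x (x + v)) ?_
      · simpa [add_sub_cancel_left] using this
      · rw [segment_eq_image']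
        exact ⟨τ, hτI, by simp⟩
    have hbnd : fderiv ℝ F (x + τ • v) v ≤ fderiv ℝ F x v + max L₀ 0 * ‖v‖^2 := by
      have h1 : fderiv ℝ F (x + τ • v) v - fderiv ℝ F x v
          = (fderiv ℝ F (x + τ • v) - fderiv ℝ F x) v := by
        simp [ContinuousLinearMap.sub_apply]
      have h2 : (fderiv ℝ F (x + τ • v) - fderiv ℝ F x) v ≤ max L₀ 0 * ‖τ • v‖ * ‖v‖ := by
        calc (fderiv ℝ F (x + τ • v) - fderiv ℝ F x) v
            ≤ ‖fderiv ℝ F (x + τ • v) - fderiv ℝ F x‖ * ‖v‖ := by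
              exact le_trans (le_abs_self _)
                ((fderiv ℝ F (x + τ • v) - fderiv ℝ F x).le_opNorm v)
          _ ≤ max L₀ 0 * ‖τ • v‖ * ‖v‖ :=
              mul_le_mul_of_nonneg_right hlip (norm_nonneg v)
      have h3 : ‖τ • v‖ ≤ ‖v‖ := by
        rw [norm_smul, Real.norm_eq_abs, abs_of_nonneg hτI.1]
        calc τ * ‖v‖ ≤ 1 * ‖v‖ := mul_le_mul_of_nonneg_right hτI.2 (norm_nonneg v)
          _ = ‖v‖ := one_mul _
      have h4 : max L₀ 0 * ‖τ • v‖ * ‖v‖ ≤ max L₀ 0 * ‖v‖^2 := by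
        have := mul_le_mul_of_nonneg_right
          (mul_le_mul_of_nonneg_left h3 (le_max_right L₀ 0)) (norm_nonneg v)
        calc max L₀ 0 * ‖τ • v‖ * ‖v‖ ≤ max L₀ 0 * ‖v‖ * ‖v‖ := this
          _ = max L₀ 0 * ‖v‖^2 := by ring
      linarith
    linarith [heq.symm.le, heq.le, hbnd]

lemma lem_crit_finite [Nontrivial E] (D : Set E) (hDopen : IsOpen D) (F : E → ℝ)
    (hsmooth : ContDiffOn ℝ (⊤ : ℕ∞) F D)
    (hiso : ∀ x₀ ∈ D, fderiv ℝ F x₀ = 0 →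
      ∃ r > 0, ∀ z ∈ closedBall x₀ r, z ≠ x₀ → fderiv ℝ F z ≠ 0)
    (S : Set E) (hS : IsCompact S) (hSD : S ⊆ D) :
    {x ∈ S | fderiv ℝ F x = 0}.Finite := by
  classical
  set C := {x ∈ S | fderiv ℝ F x = 0} with hC
  have hCS : C ⊆ S := fun x hx => hx.1
  have hf'cd : ContDiffOn ℝ (⊤ : ℕ∞) (fderiv ℝ F) D := hsmooth.fderiv_of_isOpen hDopen (by simp)
  have hf'cont : ContinuousOn (fderiv ℝ F) D := hf'cd.continuousOn
  have hCclosed : IsClosed C := by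
    rw [← closure_subset_iff_isClosed]
    intro z hz
    have hzS : z ∈ S := hS.isClosed.closure_subset (closure_mono hCS hz)
    have hne : (nhdsWithin z C).NeBot := mem_closure_iff_nhdsWithin_neBot.1 hz
    refine ⟨hzS, ?_⟩
    have hct : ContinuousWithinAt (fderiv ℝ F) C z :=
      (hf'cont.continuousAt (hDopen.mem_nhds (hSD hzS))).continuousWithinAt.mono
        (fun x hx => hx)
    have : ∀ᶠ x in nhdsWithin z C, fderiv ℝ F x ∈ ({0} : Set (E →L[ℝ] ℝ)) := by
      filter_upwards [self_mem_nhdsWithin] with x hx using hx.2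
    have hmem := isClosed_singleton.mem_of_tendsto hct this
    simpa using hmem
  have hCcomp : IsCompact C := hS.of_isClosed_subset hCclosed hCS
  -- isolation radii
  have H : ∀ x : E, x ∈ C → ∃ r > 0, ∀ z ∈ closedBall x r, z ≠ x → fderiv ℝ F z ≠ 0 :=
    fun x hx => hiso x (hSD hx.1) hx.2
  choose! r hr hrprop using H
  have hcover : C ⊆ ⋃ x ∈ C, ball x (r x) := by
    intro x hx
    exact mem_biUnion hx (mem_ball_self (hr x hx))
  obtain ⟨t, ht⟩ := hCcomp.elim_finite_subcover_image (fun x hx => isOpen_ball) hcover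
  obtain ⟨htC, htfin, htcov⟩ := ht
  refine Set.Finite.subset htfin ?_
  intro y hy
  obtain ⟨x, hxt, hyx⟩ := by
    have := htcov hy
    simpa using this
  have hxC : x ∈ C := htC hxt
  have : y = x := by
    by_contra hne
    exact hrprop x hxC y (ball_subset_closedBall hyx) hne hy.2
  rwa [this]

lemma lem_cross (γ : ℝ → E) (hγ : ContinuousOn γ (Icc 0 1)) (x : E) (rr : ℝ)
    {t₀ t₁ : ℝ} (h₀ : t₀ ∈ Icc (0:ℝ) 1) (h₁ : t₁ ∈ Icc (0:ℝ) 1)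
    (ha : dist (γ t₀) x ≤ rr) (hb : rr ≤ dist (γ t₁) x) :
    ∃ u ∈ Icc (0:ℝ) 1, dist (γ u) x = rr := by
  have hsub : uIcc t₀ t₁ ⊆ Icc 0 1 := uIcc_subset_Icc h₀ h₁
  have hcont : ContinuousOn (fun u => dist (γ u) x) (uIcc t₀ t₁) :=
    continuous_dist.comp_continuousOn (f := fun u => (γ u, x)) ((hγ.mono hsub).prodMk continuousOn_const)
  have hmem : rr ∈ uIcc (dist (γ t₀) x) (dist (γ t₁) x) := by
    rw [Set.mem_uIcc]; left; exact ⟨ha, hb⟩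
  obtain ⟨u, hu, hu2⟩ := intermediate_value_uIcc hcont hmem
  exact ⟨u, hsub hu, hu2⟩

lemma lem_uniq (D : Set E) (hDopen : IsOpen D) (hDbdd : Bornology.IsBounded D)
    (hDconv : Convex ℝ D) (F : E → ℝ) (hsmooth : ContDiffOn ℝ (⊤ : ℕ∞) F D)
    (hco : ∀ z ∈ frontier D, Tendsto F (nhdsWithin z D) atTop)
    (hstrict : ∀ x₀ ∈ D, fderiv ℝ F x₀ = 0 →
      ∃ r > 0, closedBall x₀ r ⊆ D ∧
        ∀ z ∈ closedBall x₀ r, z ≠ x₀ → F x₀ < F z ∧ fderiv ℝ F z ≠ 0)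
    {y₀ y₁ : E} (h₀ : y₀ ∈ D) (hc₀ : fderiv ℝ F y₀ = 0)
    (h₁ : y₁ ∈ D) (hc₁ : fderiv ℝ F y₁ = 0) : y₀ = y₁ := by
  by_contra hne
  haveI : Nontrivial E := ⟨⟨y₀, y₁, hne⟩⟩
  classical
  have hFcont : ContinuousOn F D := hsmooth.continuousOn
  have hf'cd : ContDiffOn ℝ (⊤ : ℕ∞) (fderiv ℝ F) D := hsmooth.fderiv_of_isOpen hDopen (by simp)
  have hf'cont : ContinuousOn (fderiv ℝ F) D := hf'cd.continuousOn
  -- the set of path-max bounds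
  set A := {a : ℝ | ∃ γ : ℝ → E, ContinuousOn γ (Icc 0 1) ∧ γ 0 = y₀ ∧ γ 1 = y₁ ∧
    (∀ t ∈ Icc (0:ℝ) 1, γ t ∈ D) ∧ ∀ t ∈ Icc (0:ℝ) 1, F (γ t) ≤ a} with hAdef
  -- the straight segment gives a bound
  have hAne : A.Nonempty := by
    set γseg : ℝ → E := fun t => y₀ + t • (y₁ - y₀) with hγseg
    have hcont : ContinuousOn γseg (Icc 0 1) := by fun_prop
    have hmem : ∀ t ∈ Icc (0:ℝ) 1, γseg t ∈ D := by
      intro t ht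
      apply hDconv.segment_subset h₀ h₁
      rw [segment_eq_image']
      exact ⟨t, ht, rfl⟩
    have himg : IsCompact (γseg '' Icc 0 1) := (isCompact_Icc).image_of_continuousOn hcont
    obtain ⟨C, hC⟩ := himg.exists_bound_of_continuousOn
      (hFcont.mono (by rintro _ ⟨t, ht, rfl⟩; exact hmem t ht))
    refine ⟨C, γseg, hcont, by simp [hγseg], by simp [hγseg], hmem, fun t ht => ?_⟩
    exact le_trans (le_abs_self _) (hC _ (mem_image_of_mem _ ht))
  have hAlb : ∀ a ∈ A, F y₀ ≤ a := by
    rintro a ⟨γ, hγc, hγ0, hγ1, hγD, hγb⟩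
    have := hγb 0 (by norm_num)
    rwa [hγ0] at this
  have hAbdd : BddBelow A := ⟨F y₀, fun a ha => hAlb a ha⟩
  set c := sInf A with hcdef
  -- strict local minimum data at y₀ and y₁
  obtain ⟨r₀, hr₀, hball₀, hprop₀⟩ := hstrict y₀ h₀ hc₀
  obtain ⟨r₁, hr₁, hball₁, hprop₁⟩ := hstrict y₁ h₁ hc₁
  -- sphere minima
  have hsphne₀ : (sphere y₀ r₀).Nonempty := NormedSpace.sphere_nonempty.2 hr₀.le
  have hsphne₁ : (sphere y₁ r₁).Nonempty := NormedSpace.sphere_nonempty.2 hr₁.le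
  have hsphD₀ : sphere y₀ r₀ ⊆ D := subset_trans sphere_subset_closedBall hball₀
  have hsphD₁ : sphere y₁ r₁ ⊆ D := subset_trans sphere_subset_closedBall hball₁
  obtain ⟨w₀, hw₀s, hw₀min⟩ := (isCompact_sphere y₀ r₀).exists_isMinOn hsphne₀
    (hFcont.mono hsphD₀)
  obtain ⟨w₁, hw₁s, hw₁min⟩ := (isCompact_sphere y₁ r₁).exists_isMinOn hsphne₁
    (hFcont.mono hsphD₁)
  set ε₀ := F w₀ - F y₀ with hε₀def
  set ε₁ := F w₁ - F y₁ with hε₁def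
  have hw₀ne : w₀ ≠ y₀ := by
    intro h; rw [mem_sphere, h] at hw₀s; simp at hw₀s; exact (ne_of_gt hr₀) hw₀s.symm
  have hw₁ne : w₁ ≠ y₁ := by
    intro h; rw [mem_sphere, h] at hw₁s; simp at hw₁s; exact (ne_of_gt hr₁) hw₁s.symm
  have hε₀ : 0 < ε₀ := by
    have := (hprop₀ w₀ (sphere_subset_closedBall hw₀s) hw₀ne).1
    rw [hε₀def]; linarith
  have hε₁ : 0 < ε₁ := by
    have := (hprop₁ w₁ (sphere_subset_closedBall hw₁s) hw₁ne).1
    rw [hε₁def]; linarith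
  -- no other critical point in the balls, so the endpoints are far apart
  have hy₁out : r₀ < dist y₁ y₀ := by
    by_contra h
    push_neg at h
    exact (hprop₀ y₁ (mem_closedBall.2 h) (fun he => hne he.symm)).2 hc₁
  have hy₀out : r₁ < dist y₀ y₁ := by
    by_contra h
    push_neg at h
    exact (hprop₁ y₀ (mem_closedBall.2 h) hne).2 hc₀
  -- lower bounds for c
  have hlb₀ : ∀ a ∈ A, F y₀ + ε₀ ≤ a := by
    rintro a ⟨γ, hγc, hγ0, hγ1, hγD, hγb⟩
    obtain ⟨u, hu, hueq⟩ := lem_cross γ hγc y₀ r₀ (t₀ := 0) (t₁ := 1)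
      (by norm_num) (by norm_num)
      (by rw [hγ0]; simp [hr₀.le]) (by rw [hγ1]; exact hy₁out.le)
    have : F w₀ ≤ F (γ u) := hw₀min (mem_sphere.2 hueq)
    have := hγb u hu
    rw [hε₀def]; linarith
  have hlb₁ : ∀ a ∈ A, F y₁ + ε₁ ≤ a := by
    rintro a ⟨γ, hγc, hγ0, hγ1, hγD, hγb⟩
    obtain ⟨u, hu, hueq⟩ := lem_cross γ hγc y₁ r₁ (t₀ := 1) (t₁ := 0)
      (by norm_num) (by norm_num)
      (by rw [hγ1]; simp [hr₁.le]) (by rw [hγ0]; exact hy₀out.le)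
    have : F w₁ ≤ F (γ u) := hw₁min (mem_sphere.2 hueq)
    have := hγb u hu
    rw [hε₁def]; linarith
  set ε := min ε₀ ε₁ with hεdef
  have hε : 0 < ε := lt_min hε₀ hε₁
  have hc₀lb : F y₀ + ε ≤ c := le_csInf hAne (fun a ha =>
    le_trans (add_le_add_right (min_le_left _ _) _) (hlb₀ a ha))
  have hc₁lb : F y₁ + ε ≤ c := le_csInf hAne (fun a ha =>
    le_trans (add_le_add_right (min_le_right _ _) _) (hlb₁ a ha))
  
  -- compact sublevel set and finite critical set
  set S : Set E := {x ∈ D | F x ∈ Iic (c + 1)} with hSdef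
  have hScomp : IsCompact S :=
    lem_sublevel_compact D hDopen hDbdd F hFcont hco isClosed_Iic (c+1) (by simp)
  have hSD : S ⊆ D := fun x hx => hx.1
  set Crit := {x ∈ S | fderiv ℝ F x = 0} with hCritdef
  have hCritfin : Crit.Finite := by
    apply lem_crit_finite D hDopen F hsmooth ?_ S hScomp hSD
    intro x₀ hx₀ hcx₀
    obtain ⟨r, hr, hrD, hrprop⟩ := hstrict x₀ hx₀ hcx₀
    exact ⟨r, hr, fun z hz hzne => (hrprop z hz hzne).2⟩
  -- δ choice separating critical values from c
  obtain ⟨δ₁, hδ₁pos, hδ₁⟩ : ∃ δ₁ > 0, ∀ x ∈ Crit, F x ≠ c → δ₁ ≤ |F x - c| := by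
    set Vfin := (hCritfin.toFinset.image F).filter (fun v => v ≠ c) with hVfin
    by_cases hV : Vfin.Nonempty
    · refine ⟨Vfin.inf' hV (fun v => |v - c|), ?_, ?_⟩
      · rw [gt_iff_lt, Finset.lt_inf'_iff]
        intro v hv
        have hvne : v ≠ c := (Finset.mem_filter.1 hv).2
        exact abs_pos.2 (sub_ne_zero.2 hvne)
      · intro x hx hxc
        have hvmem : F x ∈ Vfin := Finset.mem_filter.2
          ⟨Finset.mem_image_of_mem F (hCritfin.mem_toFinset.2 hx), hxc⟩
        exact Finset.inf'_le _ hvmem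
    · refine ⟨1, one_pos, ?_⟩
      intro x hx hxc
      exfalso
      exact hV ⟨F x, Finset.mem_filter.2
        ⟨Finset.mem_image_of_mem F (hCritfin.mem_toFinset.2 hx), hxc⟩⟩
  set δ := min (min (δ₁/2) (ε/4)) (1/4) with hδdef
  have hδpos : 0 < δ :=
    lt_min (lt_min (by linarith) (by linarith)) (by norm_num)
  have hδδ₁ : δ < δ₁ :=
    lt_of_le_of_lt (le_trans (min_le_left _ _) (min_le_left _ _)) (by linarith)
  have hδε : δ ≤ ε/4 := le_trans (min_le_left _ _) (min_le_right _ _)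
  have hδ14 : δ ≤ 1/4 := min_le_right _ _
  have hδcrit : ∀ x ∈ Crit, |F x - c| ≤ δ → F x = c := by
    intro x hx h
    by_contra hxc
    have := hδ₁ x hx hxc
    linarith
  -- level-c critical points and protecting balls
  set Critc := {x | x ∈ Crit ∧ F x = c} with hCritcdef
  have hCritcfin : Critc.Finite := hCritfin.subset (fun x hx => hx.1)
  have H2 : ∀ x, x ∈ Critc → ∃ q : ℝ × ℝ, 0 < q.1 ∧ 0 < q.2 ∧
      (∀ z ∈ closedBall x q.1, c - δ/2 < F z) ∧
      (∀ z, dist z x = q.1 → c + q.2 ≤ F z) := by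
    intro x hx
    have hxD : x ∈ D := hSD hx.1.1
    have hxcrit : fderiv ℝ F x = 0 := hx.1.2
    have hxc : F x = c := hx.2
    obtain ⟨r', hr', hr'D, hr'prop⟩ := hstrict x hxD hxcrit
    obtain ⟨θ, hθpos, hθ⟩ := Metric.continuousAt_iff.1
      (hFcont.continuousAt (hDopen.mem_nhds hxD)) (δ/2) (by linarith)
    set rx := min r' (θ/2) with hrx
    have hrxpos : 0 < rx := lt_min hr' (by linarith)
    have hrxball : closedBall x rx ⊆ D :=
      subset_trans (closedBall_subset_closedBall (min_le_left _ _)) hr'D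
    have hFlow : ∀ z ∈ closedBall x rx, c - δ/2 < F z := by
      intro z hz
      have hd : dist z x < θ :=
        lt_of_le_of_lt (le_trans (mem_closedBall.1 hz) (min_le_right _ _)) (by linarith)
      have h5 := hθ hd
      rw [Real.dist_eq, hxc] at h5
      have h6 := abs_lt.1 h5
      linarith [h6.1]
    have hsphne : (sphere x rx).Nonempty := NormedSpace.sphere_nonempty.2 hrxpos.le
    obtain ⟨w, hws, hwmin⟩ := (isCompact_sphere x rx).exists_isMinOn hsphne
      (hFcont.mono (subset_trans sphere_subset_closedBall hrxball))
    have hwne : w ≠ x := by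
      intro h; rw [mem_sphere, h] at hws; simp at hws; exact (ne_of_gt hrxpos) hws.symm
    have hwgt : c < F w := by
      have := (hr'prop w
        (closedBall_subset_closedBall (min_le_left _ _) (sphere_subset_closedBall hws)) hwne).1
      rwa [hxc] at this
    refine ⟨(rx, F w - c), hrxpos, by simpa using hwgt, hFlow, ?_⟩
    intro z hz
    have h7 : F w ≤ F z := hwmin (mem_sphere.2 hz)
    show c + (F w - c) ≤ F z
    linarith
  choose! q hq1 hq2 hq3 hq4 using H2
  obtain ⟨ρmin, hρminpos, hρmin⟩ : ∃ ρm > 0, ∀ x ∈ Critc, ρm ≤ (q x).2 := by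
    by_cases hCe : hCritcfin.toFinset.Nonempty
    · refine ⟨hCritcfin.toFinset.inf' hCe (fun x => (q x).2), ?_, ?_⟩
      · rw [gt_iff_lt, Finset.lt_inf'_iff]
        intro x hx
        exact hq2 x (hCritcfin.mem_toFinset.1 hx)
      · intro x hx
        exact Finset.inf'_le _ (hCritcfin.mem_toFinset.2 hx)
    · exact ⟨1, one_pos, fun x hx => absurd (hCritcfin.mem_toFinset.2 hx)
        (fun h => hCe ⟨x, h⟩)⟩
  -- the critical-free collar
  set Bu := ⋃ x ∈ hCritcfin.toFinset, ball x (q x).1 with hBu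
  set Aset := {x ∈ D | F x ∈ Icc (c - δ/2) (c + δ)} \ Bu with hAset
  have hAsetcomp : IsCompact Aset := by
    apply IsCompact.diff
    · exact lem_sublevel_compact D hDopen hDbdd F hFcont hco isClosed_Icc (c+δ)
        (fun v hv => hv.2)
    · exact isOpen_biUnion (fun x hx => isOpen_ball)
  have hAsetnc : ∀ x ∈ Aset, fderiv ℝ F x ≠ 0 := by
    rintro x ⟨⟨hxD, hxI⟩, hxB⟩ hcx
    have hxS : x ∈ S := ⟨hxD, by simp only [mem_Iic]; linarith [hxI.2]⟩
    have hxCrit : x ∈ Crit := ⟨hxS, hcx⟩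
    have hxc : F x = c := hδcrit x hxCrit
      (abs_le.2 ⟨by linarith [hxI.1], by linarith [hxI.2]⟩)
    have hxCritc : x ∈ Critc := ⟨hxCrit, hxc⟩
    apply hxB
    exact mem_biUnion (hCritcfin.mem_toFinset.2 hxCritc) (mem_ball_self (hq1 x hxCritc))
  obtain ⟨m, hmpos, hm⟩ : ∃ m > 0, ∀ x ∈ Aset, m ≤ ‖fderiv ℝ F x‖ := by
    rcases Aset.eq_empty_or_nonempty with he | hno
    · exact ⟨1, one_pos, fun x hx => absurd hx (by rw [he]; exact notMem_empty x)⟩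
    · have hcn : ContinuousOn (fun x => ‖fderiv ℝ F x‖) Aset :=
        (hf'cont.mono (fun x hx => hx.1.1)).norm
      obtain ⟨x₀, hx₀, hx₀min⟩ := hAsetcomp.exists_isMinOn hno hcn
      exact ⟨‖fderiv ℝ F x₀‖, norm_pos_iff.2 (hAsetnc x₀ hx₀), fun x hx => hx₀min hx⟩
  -- Taylor data on the collar region
  set K' := {x ∈ D | F x ∈ Icc (c - δ/2) (c + δ)} with hK'def
  have hK'comp : IsCompact K' :=
    lem_sublevel_compact D hDopen hDbdd F hFcont hco isClosed_Icc (c+δ) (fun v hv => hv.2)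
  obtain ⟨s₀, hs₀pos, L, M, hL0, hM0, hMbd, htay⟩ :=
    lem_taylor D hDopen F hsmooth K' hK'comp (fun x hx => hx.1)
  set s := min (s₀/(M+1)) (1/(2*L+2)) with hsdef
  have hspos : 0 < s := lt_min (by positivity) (by positivity)
  have hsM : s * M ≤ s₀ := by
    have h1 : s ≤ s₀/(M+1) := min_le_left _ _
    have h2 : s * M ≤ (s₀/(M+1)) * M := mul_le_mul_of_nonneg_right h1 hM0
    have h3 : (s₀/(M+1)) * M ≤ s₀ := by
      rw [div_mul_eq_mul_div, div_le_iff₀ (by linarith : (0:ℝ) < M + 1)]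
      nlinarith
    linarith
  have hLs : L * s ≤ 1/2 := by
    have h1 : s ≤ 1/(2*L+2) := min_le_right _ _
    have h2 : L * s ≤ L * (1/(2*L+2)) := mul_le_mul_of_nonneg_left h1 hL0
    have h3 : L * (1/(2*L+2)) ≤ 1/2 := by
      rw [mul_one_div, div_le_iff₀ (by linarith : (0:ℝ) < 2*L+2)]
      linarith
    linarith
  set η := s * m^2 / 2 with hηdef
  have hηpos : 0 < η := by positivity
  set κ := min (min (η/2) (δ/4)) (ρmin/2) with hκdef
  have hκpos : 0 < κ := lt_min (lt_min (by linarith only [hηpos]) (by linarith only [hδpos])) (by linarith only [hρminpos])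
  have hκη : κ ≤ η/2 := le_trans (min_le_left _ _) (min_le_left _ _)
  have hκδ : κ ≤ δ/4 := le_trans (min_le_left _ _) (min_le_right _ _)
  have hκρ : κ ≤ ρmin/2 := min_le_right _ _
  
  -- pick a near-optimal path
  obtain ⟨a, haA, halt⟩ := exists_lt_of_csInf_lt hAne (show c < c + κ by linarith only [hκpos])
  obtain ⟨γ, hγc, hγ0, hγ1, hγD, hγb⟩ := haA
  have hγlt : ∀ t ∈ Icc (0:ℝ) 1, F (γ t) < c + κ := fun t ht =>
    lt_of_le_of_lt (hγb t ht) halt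
  -- the path avoids the protecting balls
  have havoid : ∀ x ∈ Critc, ∀ t ∈ Icc (0:ℝ) 1, ¬ dist (γ t) x ≤ (q x).1 := by
    intro x hx t ht hdist
    have hy₀far : (q x).1 < dist y₀ x := by
      by_contra h
      push_neg at h
      have h2 := hq3 x hx y₀ (mem_closedBall.2 h)
      linarith only [h2, hc₀lb, hδε, hε]
    obtain ⟨u, hu, hueq⟩ := lem_cross γ hγc x (q x).1 (t₀ := t) (t₁ := 0) ht (by norm_num)
      hdist (by rw [hγ0]; exact hy₀far.le)
    have h3 := hq4 x hx (γ u) hueq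
    have h4 := hγlt u hu
    have h5 := hρmin x hx
    linarith only [h3, h4, h5, hκρ, hρminpos]
  -- cutoff function
  set χ : ℝ → ℝ := fun v => max 0 (min 1 ((v - (c - δ/2)) * (4/δ))) with hχdef
  have hχcont : Continuous χ := by fun_prop
  have hχ0 : ∀ v ≤ c - δ/2, χ v = 0 := by
    intro v hv
    have hnp : (v - (c - δ/2)) * (4/δ) ≤ 0 :=
      mul_nonpos_of_nonpos_of_nonneg (by linarith only [hv]) (by positivity)
    have h1 : min 1 ((v - (c - δ/2)) * (4/δ)) = (v - (c - δ/2)) * (4/δ) :=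
      min_eq_right (le_trans hnp zero_le_one)
    show max 0 (min 1 ((v - (c - δ/2)) * (4/δ))) = 0
    rw [h1]
    exact max_eq_left hnp
  have hχ1 : ∀ v, c - δ/4 ≤ v → χ v = 1 := by
    intro v hv
    have h0 : (1:ℝ) ≤ (v - (c - δ/2)) * (4/δ) := by
      have e : (1:ℝ) = (δ/4) * (4/δ) := by field_simp
      rw [e]
      apply mul_le_mul_of_nonneg_right ?_ (by positivity)
      linarith only [hv]
    show max 0 (min 1 ((v - (c - δ/2)) * (4/δ))) = 1
    rw [min_eq_left h0, max_eq_right zero_le_one]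
  have hχmem : ∀ v : ℝ, 0 ≤ χ v ∧ χ v ≤ 1 := fun v =>
    ⟨le_max_left _ _, max_le zero_le_one (min_le_left _ _)⟩
  -- gradient vector field
  set g : E → E := fun x => (InnerProductSpace.toDual ℝ E).symm (fderiv ℝ F x) with hgdef
  have hgnorm : ∀ x, ‖g x‖ = ‖fderiv ℝ F x‖ := fun x =>
    LinearIsometryEquiv.norm_map _ _
  have hgapply : ∀ x, fderiv ℝ F x (g x) = ‖fderiv ℝ F x‖^2 := by
    intro x
    have h1 : (inner ℝ (g x) (g x) : ℝ) = (fderiv ℝ F x) (g x) :=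
      InnerProductSpace.toDual_symm_apply
    rw [← hgnorm, ← real_inner_self_eq_norm_sq]
    exact h1.symm
  have hgcont : ContinuousOn g D :=
    (InnerProductSpace.toDual ℝ E).symm.continuous.comp_continuousOn hf'cont
  -- deformed path
  set γ' : ℝ → E := fun t => γ t + (-(s * χ (F (γ t)))) • g (γ t) with hγ'def
  set β := min (δ/4) (η/2) with hβdef
  have hβpos : 0 < β := lt_min (by linarith only [hδpos]) (by linarith only [hηpos])
  have hβδ : β ≤ δ/4 := min_le_left _ _
  have hβη : β ≤ η/2 := min_le_right _ _
  have hkey : ∀ t ∈ Icc (0:ℝ) 1, γ' t ∈ D ∧ F (γ' t) ≤ c - β := by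
    intro t ht
    have hxD : γ t ∈ D := hγD t ht
    have hxF : F (γ t) < c + κ := hγlt t ht
    by_cases hcase : F (γ t) ≤ c - δ/2
    · have hχz : χ (F (γ t)) = 0 := hχ0 _ hcase
      have he : γ' t = γ t := by
        show γ t + (-(s * χ (F (γ t)))) • g (γ t) = γ t
        rw [hχz]
        simp
      rw [he]
      exact ⟨hxD, by linarith only [hcase, hβδ, hδpos]⟩
    · push_neg at hcase
      have hxK' : γ t ∈ K' := ⟨hxD, ⟨hcase.le, by linarith only [hxF, hκδ, hδpos]⟩⟩
      set C := χ (F (γ t)) with hCdef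
      obtain ⟨hC0, hC1⟩ := hχmem (F (γ t))
      set P := ‖fderiv ℝ F (γ t)‖ with hPdef
      have hP0 : 0 ≤ P := norm_nonneg _
      have hPM : P ≤ M := hMbd _ hxK'
      set v := (-(s * C)) • g (γ t) with hvdef
      have hvnorm : ‖v‖ = s * C * P := by
        rw [hvdef, norm_smul, Real.norm_eq_abs, abs_neg,
          abs_of_nonneg (by positivity : (0:ℝ) ≤ s * C), hgnorm]
      have hvs₀ : ‖v‖ ≤ s₀ := by
        rw [hvnorm]
        calc s * C * P ≤ s * 1 * M := by
              apply mul_le_mul (mul_le_mul_of_nonneg_left hC1 hspos.le) hPM hP0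
              positivity
          _ = s * M := by ring
          _ ≤ s₀ := hsM
      obtain ⟨hmemD, htaylor⟩ := htay (γ t) hxK' v hvs₀
      have hfv : fderiv ℝ F (γ t) v = -(s * C) * P^2 := by
        rw [hvdef, map_smul, smul_eq_mul, hgapply]
      have hdecr : F (γ t + v) ≤ F (γ t) - (s * C / 2) * P^2 := by
        have h1 : L * ‖v‖^2 = L * s^2 * C^2 * P^2 := by rw [hvnorm]; ring
        have h2 : L * s^2 * C^2 * P^2 ≤ (1/2) * s * C * P^2 := by
          have e1 : L * s^2 * C^2 * P^2 = (L * s) * (s * (C^2 * P^2)) := by ring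
          have e2 : (L * s) * (s * (C^2 * P^2)) ≤ (1/2) * (s * (C^2 * P^2)) :=
            mul_le_mul_of_nonneg_right hLs (by positivity)
          have e3 : C^2 * P^2 ≤ C * P^2 := by
            apply mul_le_mul_of_nonneg_right ?_ (sq_nonneg P)
            calc C^2 = C * C := sq C
              _ ≤ 1 * C := mul_le_mul_of_nonneg_right hC1 hC0
              _ = C := one_mul C
          have e4 : (1/2) * (s * (C^2 * P^2)) ≤ (1/2) * (s * (C * P^2)) := by
            apply mul_le_mul_of_nonneg_left ?_ (by norm_num)
            exact mul_le_mul_of_nonneg_left e3 hspos.le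
          calc L * s^2 * C^2 * P^2 = (L * s) * (s * (C^2 * P^2)) := e1
            _ ≤ (1/2) * (s * (C^2 * P^2)) := e2
            _ ≤ (1/2) * (s * (C * P^2)) := e4
            _ = (1/2) * s * C * P^2 := by ring
        rw [hfv, h1] at htaylor
        linarith only [htaylor, h2]
      have heq : γ' t = γ t + v := rfl
      by_cases hc2 : F (γ t) < c - δ/4
      · refine ⟨by rw [heq]; exact hmemD, ?_⟩
        have hnn : 0 ≤ (s * C / 2) * P^2 := by positivity
        rw [heq]
        linarith only [hdecr, hnn, hc2, hβδ]
      · push_neg at hc2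
        have hχone : C = 1 := hχ1 _ hc2
        have hxA : γ t ∈ Aset := by
          refine ⟨⟨hxD, ⟨hcase.le, by linarith only [hxF, hκδ, hδpos]⟩⟩, ?_⟩
          intro hmem
          rw [hBu] at hmem
          simp only [mem_iUnion] at hmem
          obtain ⟨i, hi, hmemi⟩ := hmem
          exact havoid i (hCritcfin.mem_toFinset.1 hi) t ht (le_of_lt (mem_ball.1 hmemi))
        have hPm : m ≤ P := hm _ hxA
        have hm2 : m^2 ≤ P^2 := pow_le_pow_left₀ hmpos.le hPm 2
        have h5 : (s/2) * m^2 ≤ (s * C / 2) * P^2 := by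
          rw [hχone]
          calc (s/2) * m^2 ≤ (s/2) * P^2 :=
                mul_le_mul_of_nonneg_left hm2 (by positivity)
            _ = (s * 1 / 2) * P^2 := by ring
        refine ⟨by rw [heq]; exact hmemD, ?_⟩
        rw [heq]
        linarith only [hdecr, h5, hxF, hκη, hβη, hηdef]
  -- the deformed path gives a smaller bound: contradiction
  have hendpt₀ : χ (F (γ 0)) = 0 := by
    rw [hγ0]
    exact hχ0 _ (by linarith only [hc₀lb, hδε, hε])
  have hendpt₁ : χ (F (γ 1)) = 0 := by
    rw [hγ1]
    exact hχ0 _ (by linarith only [hc₁lb, hδε, hε])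
  have hγ'A : c - β ∈ A := by
    refine ⟨γ', ?_, ?_, ?_, fun t ht => (hkey t ht).1, fun t ht => (hkey t ht).2⟩
    · have h1 : ContinuousOn (fun t => F (γ t)) (Icc 0 1) :=
        hFcont.comp hγc (fun t ht => hγD t ht)
      have h2 : ContinuousOn (fun t => χ (F (γ t))) (Icc 0 1) :=
        hχcont.comp_continuousOn h1
      have h3 : ContinuousOn (fun t => g (γ t)) (Icc 0 1) :=
        hgcont.comp hγc (fun t ht => hγD t ht)
      exact hγc.add (((continuousOn_const.mul h2).neg).smul h3)
    · show γ 0 + (-(s * χ (F (γ 0)))) • g (γ 0) = y₀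
      rw [hendpt₀, hγ0]
      simp
    · show γ 1 + (-(s * χ (F (γ 1)))) • g (γ 1) = y₁
      rw [hendpt₁, hγ1]
      simp
  have hfinal : c ≤ c - β := csInf_le hAbdd hγ'A
  linarith only [hfinal, hβpos]


/-- a smooth function on an open bounded convex set `D ⊆ ℝ^d`
that tends to `+∞` at the boundary and whose Hessian is positive definite at
every critical point has exactly one critical point. -/
theorem unique_critical_point_of_posdef_hessian
    (d : ℕ) (D : Set (EuclideanSpace ℝ (Fin d)))
    (hDopen : IsOpen D) (hDbdd : Bornology.IsBounded D) (hDconv : Convex ℝ D)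
    (hDne : D.Nonempty)
    (F : EuclideanSpace ℝ (Fin d) → ℝ)
    (hsmooth : ContDiffOn ℝ (⊤ : ℕ∞) F D)
    (hcoercive : ∀ z ∈ frontier D, Tendsto F (nhdsWithin z D) atTop)
    (hhess : ∀ y ∈ D, fderiv ℝ F y = 0 →
      ∀ u : EuclideanSpace ℝ (Fin d), u ≠ 0 →
        0 < fderiv ℝ (fun z => fderiv ℝ F z u) y u) :
    ∃! y : EuclideanSpace ℝ (Fin d), y ∈ D ∧ fderiv ℝ F y = 0 := by
  have hFcont := hsmooth.continuousOn
  obtain ⟨y, hyD, hymin⟩ := lem_exists_min D hDopen hDbdd hDne F hFcont hcoercive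
    (fun a => lem_sublevel_compact D hDopen hDbdd F hFcont hcoercive isClosed_Iic a
      (fun x hx => hx))
  have hycrit : fderiv ℝ F y = 0 := by
    have hloc : IsLocalMin F y := by
      filter_upwards [hDopen.mem_nhds hyD] with x hx using hymin x hx
    exact hloc.fderiv_eq_zero
  have huniq : ∀ z w : EuclideanSpace ℝ (Fin d), z ∈ D → fderiv ℝ F z = 0 →
      w ∈ D → fderiv ℝ F w = 0 → z = w := by
    intro z w hz hcz hw hcw
    by_contra hzw
    haveI : Nontrivial (EuclideanSpace ℝ (Fin d)) := ⟨⟨z, w, hzw⟩⟩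
    have hstrict : ∀ x₀ ∈ D, fderiv ℝ F x₀ = 0 → ∃ r > 0, closedBall x₀ r ⊆ D ∧
        ∀ u ∈ closedBall x₀ r, u ≠ x₀ → F x₀ < F u ∧ fderiv ℝ F u ≠ 0 :=
      fun x₀ hx₀ hcx₀ => lem_strict_local D hDopen F hsmooth hx₀ hcx₀ (hhess x₀ hx₀ hcx₀)
    exact hzw (lem_uniq D hDopen hDbdd hDconv F hsmooth hcoercive hstrict hz hcz hw hcw)
  exact ⟨y, ⟨hyD, hycrit⟩, fun z hz => huniq z y hz.1 hz.2 hyD hycrit⟩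
end

section
/- Let K_1 = {-1, 0, 1} ⊂ R and K_2 = {-3/√13, 3/√13} ⊂ R. Both the identity map and the projective transformation φ(x) = x/(3-x) fit the centroids: γ(K_1) = γ(K_2) = 0, and γ(φ(K_1)) = γ(φ(K_2)) = 1/12. Moreover φ is not affine. -/
theorem div_sub_add_neg_div_sub_neg {K : Type*} [Field K] {c t : K} (h : t ^ 2 ≠ c ^ 2) :
    t / (c - t) + -t / (c - -t) = 2 * t ^ 2 / (c ^ 2 - t ^ 2) := by
  have hsq : c ^ 2 - t ^ 2 ≠ 0 := sub_ne_zero.mpr h.symm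
  have hsub : c - t ≠ 0 := fun h0 => hsq (by linear_combination (c + t) * h0)
  have hadd : c - -t ≠ 0 := fun h0 => hsq (by linear_combination (c - t) * h0)
  field_simp
  ring

/-- for `K₁ = {-1,0,1}` and `K₂ = {-3/√13, 3/√13}` in `ℝ`, both
the identity and the non-affine projective map `φ(x) = x/(3-x)` fit the
centroids: the centroids of `K₁`, `K₂` are both `0`, and the centroids of
`φ(K₁)`, `φ(K₂)` are both `1/12`. -/
theorem nonuniqueness_example_on_line
    (φ : ℝ → ℝ) (hφ : ∀ x : ℝ, φ x = x / (3 - x)) :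
    ((-1 : ℝ) + 0 + 1) / 3 = 0 ∧
    ((-3 / Real.sqrt 13) + 3 / Real.sqrt 13) / 2 = 0 ∧
    (φ (-1) + φ 0 + φ 1) / 3 = 1 / 12 ∧
    (φ (-3 / Real.sqrt 13) + φ (3 / Real.sqrt 13)) / 2 = 1 / 12 ∧
    ¬∃ a b : ℝ, ∀ x : ℝ, x < 3 → φ x = a * x + b := by
  have ht : (3 / Real.sqrt 13) ^ 2 = 9 / 13 := by
    rw [div_pow, Real.sq_sqrt (by norm_num)]; norm_num
  refine ⟨by norm_num, by ring, by simp only [hφ]; norm_num, ?_, ?_⟩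
  · rw [hφ, hφ, neg_div, add_comm, div_sub_add_neg_div_sub_neg (by rw [ht]; norm_num), ht]
    norm_num
  · rintro ⟨a, b, h⟩
    -- an affine map has zero second difference, but φ 0 - 2 φ 1 + φ 2 = 1
    have h0 := h 0 (by norm_num)
    have h1 := h 1 (by norm_num)
    have h2 := h 2 (by norm_num)
    simp only [hφ] at h0 h1 h2
    norm_num at h0 h1 h2
    linarith
end
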